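/- arXiv:1607.02590 — 12 statements merged into one kernel-verified Lean document; each statement's English description precedes it below -/
import Mathlib

section
/- Let (V,q) be a nondegenerate quadratic space and τ an isometry. The Wall form ω_τ on R(τ), defined by ω_τ(τ(x)-x, τ(y)-y) = b_q(τ(x)-x, y), is a well-defined bilinear form; that is, if τ(x)-x = τ(x')-x' and τ(y)-y = τ(y')-y' then b_q(τ(x)-x, y) = b_q(τ(x')-x', y'). -/
namespace QuadraticMap

variable {R M N : Type*} [CommRing R] [AddCommGroup M] [Module R M] [AddCommGroup N] [Module R N]

theorem polarBilin_map_map_of_isometry (q : QuadraticMap R M N) {τ : M →ₗ[R] M}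
    (hτ : ∀ x, q (τ x) = q x) (a b : M) :
    polarBilin q (τ a) (τ b) = polarBilin q a b := by
  have hcomp : q.comp τ = q := ext hτ
  rw [← LinearMap.compl₁₂_apply, ← polarBilin_comp, hcomp]

theorem polarBilin_sub_self_eq_zero_of_isometry (q : QuadraticMap R M N) {τ : M →ₗ[R] M}
    (hτ : ∀ x, q (τ x) = q x) (x : M) {z : M} (hz : τ z = z) :
    polarBilin q (τ x - x) z = 0 := by
  conv_lhs => rw [← hz]
  rw [map_sub, LinearMap.sub_apply, polarBilin_map_map_of_isometry q hτ, sub_eq_zero, hz]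

end QuadraticMap

theorem wall_stmt2_general {F V : Type*} [Field F] [AddCommGroup V] [Module F V]
    (q : QuadraticForm F V)
    (τ : V →ₗ[F] V) (hτ : ∀ x, q (τ x) = q x)
    (x x' y y' : V) (hx : τ x - x = τ x' - x') (hy : τ y - y = τ y' - y') :
    QuadraticMap.polarBilin q (τ x - x) y = QuadraticMap.polarBilin q (τ x' - x') y' := by
  have hfix : τ (y - y') = y - y' := by
    rwa [map_sub, sub_eq_sub_iff_sub_eq_sub]
  rw [hx, ← sub_eq_zero, ← map_sub]
  exact QuadraticMap.polarBilin_sub_self_eq_zero_of_isometry q hτ x' hfix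

theorem wall_stmt2 {F V : Type*} [Field F] [AddCommGroup V] [Module F V]
    [FiniteDimensional F V] (q : QuadraticForm F V)
    (hq : LinearMap.BilinForm.Nondegenerate (QuadraticMap.polarBilin q))
    (τ : V →ₗ[F] V) (hτ : ∀ x, q (τ x) = q x)
    (x x' y y' : V) (hx : τ x - x = τ x' - x') (hy : τ y - y = τ y' - y') :
    QuadraticMap.polarBilin q (τ x - x) y = QuadraticMap.polarBilin q (τ x' - x') y' :=
  wall_stmt2_general q τ hτ x x' y y' hx hy
end

section
/- Let (V,q) be a nondegenerate quadratic space and τ an isometry. The Wall form ω_τ is symmetric if and only if τ² = id. -/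
/-!
Using symmetry of the polar form `B`, the Wall form is symmetric exactly when `τ` is
self-adjoint for `B`. An isometry `τ` satisfies `B (τ x) (τ y) = B x y`, so self-adjointness
gives `B x (τ (τ y)) = B x y` for all `x`, and nondegeneracy forces `τ² = id`; conversely an
involutive isometry is its own adjoint.
-/

namespace LinearMap

variable {R M : Type*} [CommRing R] [AddCommGroup M] [Module R M] {B : LinearMap.BilinForm R M}
  {τ : M →ₗ[R] M}

theorem BilinForm.IsSymm.forall_apply_sub_self_comm_iff_isAdjointPair (hB : B.IsSymm) :
    (∀ x y, B (τ x - x) y = B (τ y - y) x) ↔ IsAdjointPair B B τ τ := by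
  refine forall₂_congr fun x y => ?_
  rw [map_sub, map_sub, LinearMap.sub_apply, LinearMap.sub_apply, hB.eq (τ y) x, hB.eq y x,
    sub_left_inj]

theorem IsOrthogonal.isAdjointPair_of_comp_self (hτ : B.IsOrthogonal τ)
    (hτ₂ : τ ∘ₗ τ = LinearMap.id) : IsAdjointPair B B τ τ := fun x y => by
  rw [← hτ x (τ y), ← comp_apply τ τ, hτ₂, id_apply]

theorem IsOrthogonal.comp_self_of_isAdjointPair (hB : B.Nondegenerate)
    (hτ : B.IsOrthogonal τ) (hadj : IsAdjointPair B B τ τ) : τ ∘ₗ τ = LinearMap.id := by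
  ext y
  refine sub_eq_zero.mp (hB.2 _ fun x => ?_)
  rw [comp_apply, id_apply, map_sub, ← hadj, hτ, sub_self]

end LinearMap

namespace QuadraticMap

variable {R M : Type*} [CommRing R] [AddCommGroup M] [Module R M]

theorem isSymm_polarBilin (q : QuadraticForm R M) : LinearMap.BilinForm.IsSymm (polarBilin q) :=
  ⟨polar_comm q⟩

theorem isOrthogonal_polarBilin {q : QuadraticForm R M} {τ : M →ₗ[R] M}
    (hτ : ∀ x, q (τ x) = q x) : (polarBilin q).IsOrthogonal τ := fun x y => by
  have hcomp : q.comp τ = q := QuadraticMap.ext hτ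
  simpa [hcomp] using (LinearMap.congr_fun₂ (polarBilin_comp q τ) x y).symm

end QuadraticMap

open QuadraticMap in
theorem wall_stmt5_general {F V : Type*} [Field F] [AddCommGroup V] [Module F V]
    (q : QuadraticForm F V)
    (hq : LinearMap.BilinForm.Nondegenerate (QuadraticMap.polarBilin q))
    (τ : V →ₗ[F] V) (hτ : ∀ x, q (τ x) = q x) :
    (∀ x y : V, QuadraticMap.polarBilin q (τ x - x) y =
        QuadraticMap.polarBilin q (τ y - y) x) ↔ τ ∘ₗ τ = LinearMap.id := by
  have horth := isOrthogonal_polarBilin hτ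
  rw [(isSymm_polarBilin q).forall_apply_sub_self_comm_iff_isAdjointPair]
  exact ⟨horth.comp_self_of_isAdjointPair hq, horth.isAdjointPair_of_comp_self⟩

theorem wall_stmt5 {F V : Type*} [Field F] [AddCommGroup V] [Module F V]
    [FiniteDimensional F V] (q : QuadraticForm F V)
    (hq : LinearMap.BilinForm.Nondegenerate (QuadraticMap.polarBilin q))
    (τ : V →ₗ[F] V) (hτ : ∀ x, q (τ x) = q x) :
    (∀ x y : V, QuadraticMap.polarBilin q (τ x - x) y =
        QuadraticMap.polarBilin q (τ y - y) x) ↔ τ ∘ₗ τ = LinearMap.id :=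
  wall_stmt5_general q hq τ hτ
end

section
/- Let (V,q) be a nondegenerate quadratic space and τ an isometry. The Wall form ω_τ is antisymmetric (i.e., ω_τ(u,v) = -ω_τ(v,u) for all u,v) if and only if (τ - id)² = 0. -/
/-!
Write `b` for the polar form of `q` and `σ = τ - 1`. Since `τ` preserves `b`,
`b (σ x) (σ y) = -(b (σ x) y + b (σ y) x)`, so the Wall form is antisymmetric exactly when
`b (σ x) (σ y)` vanishes identically. Moreover `σ² x = τ (σ x) - σ x` gives
`b (σ² x) (τ y) = -b (σ x) (σ y)`, and since `τ` is surjective (an injective endomorphism of a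
finite-dimensional space, injective by nondegeneracy), `b` nondegenerate turns this into
`σ² = 0`.
-/

open QuadraticMap

section Isometry

variable {R M : Type*} [CommRing R] [AddCommGroup M] [Module R M]
  {q : QuadraticForm R M} {τ : M →ₗ[R] M}

theorem polarBilin_map_map_of_isometry (hτ : ∀ x, q (τ x) = q x) (x y : M) :
    polarBilin q (τ x) (τ y) = polarBilin q x y := by
  simp only [polarBilin_apply_apply, polar, ← map_add, hτ]

theorem polarBilin_sub_self_sub_self_of_isometry (hτ : ∀ x, q (τ x) = q x) (x y : M) :
    polarBilin q (τ x - x) (τ y - y) =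
      -(polarBilin q (τ x - x) y + polarBilin q (τ y - y) x) := by
  have hinv := polarBilin_map_map_of_isometry hτ x y
  have hsym : polarBilin q y x = polarBilin q x y := polar_comm q y x
  have hsym' : polarBilin q (τ y) x = polarBilin q x (τ y) := polar_comm q (τ y) x
  simp only [map_sub, LinearMap.sub_apply]
  linear_combination hinv - hsym + hsym'

theorem polarBilin_sub_id_sq_of_isometry (hτ : ∀ x, q (τ x) = q x) (x y : M) :
    polarBilin q (((τ - LinearMap.id) ∘ₗ (τ - LinearMap.id)) x) (τ y) =
      -polarBilin q (τ x - x) (τ y - y) := by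
  have hinv := polarBilin_map_map_of_isometry hτ (τ x - x) y
  simp only [LinearMap.comp_apply, LinearMap.sub_apply, LinearMap.id_apply, map_sub,
    LinearMap.sub_apply] at hinv ⊢
  linear_combination hinv

theorem injective_of_isometry (hq : (polarBilin q).Nondegenerate) (hτ : ∀ x, q (τ x) = q x) :
    Function.Injective τ := by
  rw [← LinearMap.ker_eq_bot, LinearMap.ker_eq_bot']
  intro m hm
  refine hq.1 m fun n => ?_
  simpa [hm] using (polarBilin_map_map_of_isometry hτ m n).symm

theorem sub_id_sq_eq_zero_iff_of_isometry (hq : (polarBilin q).Nondegenerate)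
    (hτ : ∀ x, q (τ x) = q x) (hsurj : Function.Surjective τ) :
    (τ - LinearMap.id) ∘ₗ (τ - LinearMap.id) = 0 ↔
      ∀ x y, polarBilin q (τ x - x) (τ y - y) = 0 := by
  constructor
  · intro h x y
    have key := polarBilin_sub_id_sq_of_isometry hτ x y
    rwa [h, LinearMap.zero_apply, map_zero, LinearMap.zero_apply, eq_comm, neg_eq_zero] at key
  · intro h
    ext x
    refine hq.1 _ fun n => ?_
    obtain ⟨y, rfl⟩ := hsurj n
    rw [polarBilin_sub_id_sq_of_isometry hτ, h, neg_zero]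

end Isometry

theorem wall_stmt6 {F V : Type*} [Field F] [AddCommGroup V] [Module F V]
    [FiniteDimensional F V] (q : QuadraticForm F V)
    (hq : LinearMap.BilinForm.Nondegenerate (QuadraticMap.polarBilin q))
    (τ : V →ₗ[F] V) (hτ : ∀ x, q (τ x) = q x) :
    (∀ x y : V, QuadraticMap.polarBilin q (τ x - x) y =
        - QuadraticMap.polarBilin q (τ y - y) x) ↔
      (τ - LinearMap.id) ∘ₗ (τ - LinearMap.id) = 0 := by
  have hsurj : Function.Surjective τ :=
    LinearMap.surjective_of_injective (injective_of_isometry hq hτ)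
  rw [sub_id_sq_eq_zero_iff_of_isometry hq hτ hsurj]
  refine forall₂_congr fun x y => ?_
  rw [polarBilin_sub_self_sub_self_of_isometry hτ, neg_eq_zero, add_eq_zero_iff_eq_neg]
end

section
/- Let (V,q) be a nondegenerate quadratic space and τ an isometry. The following are equivalent: (1) (τ - id)² = 0; (2) R(τ) ⊆ K(τ); (3) the restriction of the polar form b_q to R(τ) is zero (i.e., q restricted to R(τ) is totally singular). -/
/-!
Write `B` for the polar form. Since `τ` preserves `B`,
`B (τ x - x) (τ y) = B x y - B x (τ y) = -B x (τ y - y)`.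
If `w` is fixed by `τ`, taking `y = w` gives `B (τ x - x) w = 0`, so `R(τ) ⟂ K(τ)` and (2) implies
(3). Conversely, for `w = τ y - y` and any `x`,
`B x (τ w - w) = -B (τ x - x) (τ w) = -B (τ x - x) (τ w - w) - B (τ x - x) w`, and both terms
vanish under (3) because `τ w - w` lies in `R(τ)` too; so `τ w = w` by nondegeneracy.
-/

namespace QuadraticMap

variable {R M N : Type*} [CommRing R] [AddCommGroup M] [Module R M] [AddCommGroup N] [Module R N]
  {Q : QuadraticMap R M N} {τ : M →ₗ[R] M}

theorem polarBilin_map_map (hτ : ∀ x, Q (τ x) = Q x) (x y : M) :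
    polarBilin Q (τ x) (τ y) = polarBilin Q x y := by
  simp only [polarBilin_apply_apply, polar, ← map_add, hτ]

theorem polarBilin_sub_map (hτ : ∀ x, Q (τ x) = Q x) (x y : M) :
    polarBilin Q (τ x - x) (τ y) = -polarBilin Q x (τ y - y) := by
  simp only [map_sub, LinearMap.sub_apply, polarBilin_map_map hτ]
  abel

theorem polarBilin_sub_eq_zero_of_map_eq_self (hτ : ∀ x, Q (τ x) = Q x) (x : M) {w : M}
    (hw : τ w = w) : polarBilin Q (τ x - x) w = 0 := by
  conv_lhs => rw [← hw]
  rw [polarBilin_sub_map hτ, hw, sub_self, map_zero, neg_zero]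

theorem range_sub_id_le_ker_sub_id_iff (hQ : (polarBilin Q).SeparatingRight)
    (hτ : ∀ x, Q (τ x) = Q x) :
    LinearMap.range (τ - LinearMap.id) ≤ LinearMap.ker (τ - LinearMap.id) ↔
      ∀ x y, polarBilin Q (τ x - x) (τ y - y) = 0 := by
  simp only [SetLike.le_def, LinearMap.mem_range, LinearMap.mem_ker, forall_exists_index,
    forall_apply_eq_imp_iff, LinearMap.sub_apply, LinearMap.id_apply, sub_eq_zero]
  constructor
  · intro h x y
    exact polarBilin_sub_eq_zero_of_map_eq_self hτ x (h y)
  · intro h y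
    refine sub_eq_zero.1 (hQ _ fun x => ?_)
    have hτw : τ (τ y - y) = (τ (τ y - y) - (τ y - y)) + (τ y - y) := by abel
    rw [← neg_eq_zero, ← polarBilin_sub_map hτ, hτw, map_add, h, h, add_zero]

end QuadraticMap

theorem wall_stmt7_general {F V : Type*} [Field F] [AddCommGroup V] [Module F V]
    (q : QuadraticForm F V)
    (hq : LinearMap.BilinForm.Nondegenerate (QuadraticMap.polarBilin q))
    (τ : V →ₗ[F] V) (hτ : ∀ x, q (τ x) = q x) :
    ((τ - LinearMap.id) ∘ₗ (τ - LinearMap.id) = 0 ↔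
      LinearMap.range (τ - LinearMap.id) ≤ LinearMap.ker (τ - LinearMap.id)) ∧
    (LinearMap.range (τ - LinearMap.id) ≤ LinearMap.ker (τ - LinearMap.id) ↔
      ∀ x y : V, QuadraticMap.polarBilin q (τ x - x) (τ y - y) = 0) :=
  ⟨LinearMap.range_le_ker_iff.symm, QuadraticMap.range_sub_id_le_ker_sub_id_iff hq.2 hτ⟩

theorem wall_stmt7 {F V : Type*} [Field F] [AddCommGroup V] [Module F V]
    [FiniteDimensional F V] (q : QuadraticForm F V)
    (hq : LinearMap.BilinForm.Nondegenerate (QuadraticMap.polarBilin q))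
    (τ : V →ₗ[F] V) (hτ : ∀ x, q (τ x) = q x) :
    ((τ - LinearMap.id) ∘ₗ (τ - LinearMap.id) = 0 ↔
      LinearMap.range (τ - LinearMap.id) ≤ LinearMap.ker (τ - LinearMap.id)) ∧
    (LinearMap.range (τ - LinearMap.id) ≤ LinearMap.ker (τ - LinearMap.id) ↔
      ∀ x y : V, QuadraticMap.polarBilin q (τ x - x) (τ y - y) = 0) :=
  wall_stmt7_general q hq τ hτ
end

section
/- Let (V,q) be a nondegenerate quadratic space and τ an isometry with (τ - id)² = 0. If W is a vector-space complement of R(τ) inside K(τ), then W is a regular subspace (W ∩ W^⊥ = {0}). -/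
/-!
Let `B` be the polar form of `q` and `σ = τ - 1`. Since `τ` preserves `B`,
`B k (σ x) = B (τ k) (τ x) - B k x = 0` for `k ∈ ker σ`, so `range σ ⊆ (ker σ)^⊥`, and by
nondegeneracy both sides have dimension `dim V - dim ker σ`; hence `range σ = (ker σ)^⊥`. A vector `w ∈ W ∩ W^⊥` lies in `ker σ`, so it is
orthogonal to `range σ` as well as to `W`, hence to `W ⊔ range σ = ker σ`. Thus `w ∈ range σ ∩ W = 0`.
-/

namespace LinearMap.BilinForm

theorem inf_orthogonal_eq_bot_of_eq_orthogonal_sup {R M : Type*} [CommRing R] [AddCommGroup M]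
    [Module R M] {B : LinearMap.BilinForm R M} (hB : B.IsRefl) {W N : Submodule R M}
    (hWN : W ⊓ N = ⊥) (hN : N = B.orthogonal (W ⊔ N)) : W ⊓ B.orthogonal W = ⊥ := by
  rw [Submodule.eq_bot_iff]
  rintro w ⟨hwW, hwW'⟩
  have hw : w ∈ B.orthogonal (W ⊔ N) := by
    rw [mem_orthogonal_iff]
    intro k hk
    obtain ⟨v, hv, n, hn, rfl⟩ := Submodule.mem_sup.mp hk
    have hvw : B v w = 0 := hwW' v hv
    have hn' : n ∈ B.orthogonal (W ⊔ N) := hN ▸ hn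
    have hnw : B n w = 0 := hB _ _ (hn' w (Submodule.mem_sup_left hwW))
    show B (v + n) w = 0
    rw [map_add, LinearMap.add_apply, hvw, hnw, add_zero]
  have hwWN : w ∈ W ⊓ N := ⟨hwW, hN ▸ hw⟩
  rwa [hWN] at hwWN

variable {K V : Type*} [Field K] [AddCommGroup V] [Module K V] [FiniteDimensional K V]

theorem range_sub_id_eq_orthogonal_ker {B : LinearMap.BilinForm K V} (hB : B.Nondegenerate)
    {τ : V →ₗ[K] V} (hτ : ∀ x y, B (τ x) (τ y) = B x y) :
    range (τ - LinearMap.id) = B.orthogonal (ker (τ - LinearMap.id)) := by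
  apply Submodule.eq_of_le_of_finrank_le
  · rintro _ ⟨x, rfl⟩ k hk
    have hτk : τ k = k := sub_eq_zero.mp hk
    calc B k ((τ - LinearMap.id : V →ₗ[K] V) x) = B (τ k) (τ x) - B k x := by rw [hτk]; simp
      _ = 0 := by rw [hτ, sub_self]
  · rw [finrank_orthogonal hB, ← finrank_range_add_finrank_ker (τ - LinearMap.id)]
    omega

end LinearMap.BilinForm

theorem wall_stmt8_general {F V : Type*} [Field F] [AddCommGroup V] [Module F V]
    [FiniteDimensional F V] (q : QuadraticForm F V)
    (hq : LinearMap.BilinForm.Nondegenerate (QuadraticMap.polarBilin q))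
    (τ : V →ₗ[F] V) (hτ : ∀ x, q (τ x) = q x)
    (W : Submodule F V)
    (hW1 : W ⊓ LinearMap.range (τ - LinearMap.id) = ⊥)
    (hW2 : W ⊔ LinearMap.range (τ - LinearMap.id) = LinearMap.ker (τ - LinearMap.id)) :
    W ⊓ LinearMap.BilinForm.orthogonal (QuadraticMap.polarBilin q) W = ⊥ := by
  have hrefl : (QuadraticMap.polarBilin q).IsRefl := fun x y h => by
    rwa [QuadraticMap.polarBilin_apply_apply, QuadraticMap.polar_comm,
      ← QuadraticMap.polarBilin_apply_apply]
  have hiso : ∀ x y, QuadraticMap.polarBilin q (τ x) (τ y) = QuadraticMap.polarBilin q x y :=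
    fun x y => by simp only [QuadraticMap.polarBilin_apply_apply, QuadraticMap.polar, ← map_add, hτ]
  refine LinearMap.BilinForm.inf_orthogonal_eq_bot_of_eq_orthogonal_sup hrefl hW1 ?_
  rw [hW2]
  exact LinearMap.BilinForm.range_sub_id_eq_orthogonal_ker hq hiso

theorem wall_stmt8 {F V : Type*} [Field F] [AddCommGroup V] [Module F V]
    [FiniteDimensional F V] (q : QuadraticForm F V)
    (hq : LinearMap.BilinForm.Nondegenerate (QuadraticMap.polarBilin q))
    (τ : V →ₗ[F] V) (hτ : ∀ x, q (τ x) = q x)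
    (h2 : (τ - LinearMap.id) ∘ₗ (τ - LinearMap.id) = 0)
    (W : Submodule F V)
    (hW1 : W ⊓ LinearMap.range (τ - LinearMap.id) = ⊥)
    (hW2 : W ⊔ LinearMap.range (τ - LinearMap.id) = LinearMap.ker (τ - LinearMap.id)) :
    W ⊓ LinearMap.BilinForm.orthogonal (QuadraticMap.polarBilin q) W = ⊥ :=
  wall_stmt8_general q hq τ hτ W hW1 hW2
end

section
/- Let (V,q) be a nondegenerate quadratic space and τ an isometry with (τ - id)² = 0. If W is a complement of R(τ) in K(τ) and τ' denotes the restriction of τ to W^⊥, then K(τ') = R(τ') = R(τ). -/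
/-!
Write `σ = τ - 1` and `B` for the polar form. Since `τ` is an isometry,
`B (σ x) y = -B (τ x) (σ y)`, and `σ² = 0` makes `R(σ)` totally isotropic; together these give
`K(τ) = R(τ)^⊥`, hence `K(τ)^⊥ = R(τ)`. Then `K(τ') = W^⊥ ∩ R^⊥ = (W + R)^⊥ = K^⊥ = R`, while
`W^⊥ + K = (W ∩ R)^⊥ = V`, so `τ - 1` maps `W^⊥` onto all of `R(τ)`.
-/

open LinearMap (BilinForm)

namespace LinearMap.BilinForm

section CommRing

variable {R M : Type*} [CommRing R] [AddCommGroup M] [Module R M] {B : BilinForm R M}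

theorem orthogonal_sup (N L : Submodule R M) :
    B.orthogonal (N ⊔ L) = B.orthogonal N ⊓ B.orthogonal L := by
  ext x
  simp only [Submodule.mem_inf, mem_orthogonal_iff, Submodule.mem_sup]
  constructor
  · intro h
    exact ⟨fun n hn => h n ⟨n, hn, 0, L.zero_mem, add_zero n⟩,
      fun l hl => h l ⟨0, N.zero_mem, l, hl, zero_add l⟩⟩
  · rintro ⟨hN, hL⟩ _ ⟨n, hn, l, hl, rfl⟩
    rw [map_add, LinearMap.add_apply, hN n hn, hL l hl, add_zero]

variable {τ : M →ₗ[R] M} (hτ : ∀ x y, B (τ x) (τ y) = B x y)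
include hτ

theorem apply_sub_self_left (x y : M) : B (τ x - x) y = -B (τ x) (τ y - y) := by
  simp only [map_sub, LinearMap.sub_apply, hτ]
  ring

theorem apply_sub_self_sub_self (h2 : (τ - LinearMap.id) ∘ₗ (τ - LinearMap.id) = 0) (x y : M) :
    B (τ x - x) (τ y - y) = 0 := by
  have hy : τ (τ y - y) - (τ y - y) = 0 := by simpa using LinearMap.congr_fun h2 y
  rw [apply_sub_self_left hτ, hy, map_zero, neg_zero]

theorem ker_sub_id_eq_orthogonal_range (hB : B.Nondegenerate)
    (h2 : (τ - LinearMap.id) ∘ₗ (τ - LinearMap.id) = 0) :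
    LinearMap.ker (τ - LinearMap.id) = B.orthogonal (LinearMap.range (τ - LinearMap.id)) := by
  ext x
  simp only [LinearMap.mem_ker, mem_orthogonal_iff, LinearMap.mem_range, forall_exists_index,
    forall_apply_eq_imp_iff, LinearMap.sub_apply, LinearMap.id_apply]
  constructor
  · intro hx y
    rw [apply_sub_self_left hτ, hx, map_zero, neg_zero]
  · intro h
    refine hB.2 _ fun y => ?_
    -- `τ y = y + (τ y - y)` and `τ y - y ⊥ τ x - x`, so `B y (τ x - x) = B (τ y) (τ x - x)`.
    have := apply_sub_self_left hτ y x
    rwa [h y, ← add_sub_cancel y (τ y), map_add, LinearMap.add_apply,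
      apply_sub_self_sub_self hτ h2, add_zero, zero_eq_neg] at this

end CommRing

variable {K V : Type*} [Field K] [AddCommGroup V] [Module K V] [FiniteDimensional K V]
  {B : BilinForm K V}

theorem orthogonal_inf (hB : B.Nondegenerate) (hB₀ : B.IsRefl) (N L : Submodule K V) :
    B.orthogonal (N ⊓ L) = B.orthogonal N ⊔ B.orthogonal L := by
  rw [← orthogonal_orthogonal hB hB₀ (B.orthogonal N ⊔ B.orthogonal L), orthogonal_sup,
    orthogonal_orthogonal hB hB₀, orthogonal_orthogonal hB hB₀]

end LinearMap.BilinForm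

open LinearMap LinearMap.BilinForm in
theorem wall_stmt10 {F V : Type*} [Field F] [AddCommGroup V] [Module F V]
    [FiniteDimensional F V] (q : QuadraticForm F V)
    (hq : LinearMap.BilinForm.Nondegenerate (QuadraticMap.polarBilin q))
    (τ : V →ₗ[F] V) (hτ : ∀ x, q (τ x) = q x)
    (h2 : (τ - LinearMap.id) ∘ₗ (τ - LinearMap.id) = 0)
    (W : Submodule F V)
    (hW1 : W ⊓ LinearMap.range (τ - LinearMap.id) = ⊥)
    (hW2 : W ⊔ LinearMap.range (τ - LinearMap.id) = LinearMap.ker (τ - LinearMap.id)) :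
    {x : V | x ∈ LinearMap.BilinForm.orthogonal (QuadraticMap.polarBilin q) W ∧ τ x = x} =
      {v : V | ∃ x ∈ LinearMap.BilinForm.orthogonal (QuadraticMap.polarBilin q) W,
        τ x - x = v} ∧
    {v : V | ∃ x ∈ LinearMap.BilinForm.orthogonal (QuadraticMap.polarBilin q) W,
        τ x - x = v} = (LinearMap.range (τ - LinearMap.id) : Set V) := by
  set B : BilinForm F V := QuadraticMap.polarBilin q
  set σ := τ - LinearMap.id
  have hB₀ : B.IsRefl := fun x y h => by rwa [QuadraticMap.polarBilin_apply_apply,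
    QuadraticMap.polar_comm, ← QuadraticMap.polarBilin_apply_apply]
  have hiso : ∀ x y, B (τ x) (τ y) = B x y := fun x y => by
    simp only [B, QuadraticMap.polarBilin_apply_apply, QuadraticMap.polar, ← map_add, hτ]
  have hK := ker_sub_id_eq_orthogonal_range hiso hq h2
  have hfix : B.orthogonal W ⊓ ker σ = range σ := by
    rw [hK, ← orthogonal_sup, hW2, hK, orthogonal_orthogonal hq hB₀]
  have hspan : B.orthogonal W ⊔ ker σ = ⊤ := by
    rw [hK, ← orthogonal_inf hq hB₀, hW1, orthogonal_bot]
  have hmap : (B.orthogonal W).map σ = range σ :=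
    le_antisymm LinearMap.map_le_range (by rw [range_eq_map, LinearMap.map_le_map_iff, hspan])
  have hfix_set : {x | x ∈ B.orthogonal W ∧ τ x = x} = ↑(B.orthogonal W ⊓ ker σ) := by
    ext x
    simp [σ, sub_eq_zero]
  have hmap_set : {v | ∃ x ∈ B.orthogonal W, τ x - x = v} = ↑((B.orthogonal W).map σ) :=
    rfl
  exact ⟨by rw [hfix_set, hmap_set, hfix, hmap], by rw [hmap_set, hmap]⟩
end

section
/- Let (V,q) be a 4-dimensional nondegenerate quadratic space and τ an isometry such that K(τ) is a 2-dimensional totally isotropic subspace. Then K(τ) = K(τ)^⊥ = R(τ), and in particular (τ - id)² = 0. -/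
/-!
An isometry `τ` preserves the polar form, so for every fixed vector `x`
`polar (τ v - v) x = polar (τ v) (τ x) - polar v x = 0`: the range of `τ - 1` lies in `K(τ)^⊥`.
A totally isotropic `K(τ)` lies in `K(τ)^⊥` as well. In dimension 4 all three spaces have
dimension 2 (nondegeneracy for `K(τ)^⊥`, rank–nullity for the range), hence they coincide,
and `range (τ - 1) ≤ ker (τ - 1)` says `(τ - 1)² = 0`.
-/

namespace QuadraticMap

variable {R M : Type*} [CommRing R] [AddCommGroup M] [Module R M]

theorem le_orthogonal_polarBilin_of_isotropic (q : QuadraticForm R M) {W : Submodule R M}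
    (hW : ∀ x ∈ W, q x = 0) : W ≤ LinearMap.BilinForm.orthogonal (polarBilin q) W := by
  intro x hx y hy
  simp [polar, hW _ hx, hW _ hy, hW _ (W.add_mem hy hx)]

theorem range_sub_id_le_orthogonal_ker (q : QuadraticForm R M) {τ : M →ₗ[R] M}
    (hτ : ∀ x, q (τ x) = q x) :
    LinearMap.range (τ - LinearMap.id) ≤
      LinearMap.BilinForm.orthogonal (polarBilin q) (LinearMap.ker (τ - LinearMap.id)) := by
  rintro _ ⟨v, rfl⟩ x hx
  have hτx : τ x = x := sub_eq_zero.mp hx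
  have hpolar : polar q (τ x) (τ v) = polar q x v := by
    simp only [polar, ← map_add, hτ]
  simp [polar_sub_right, ← hpolar, hτx]

end QuadraticMap

theorem wall_stmt11 {F V : Type*} [Field F] [AddCommGroup V] [Module F V]
    [FiniteDimensional F V] (q : QuadraticForm F V)
    (hq : LinearMap.BilinForm.Nondegenerate (QuadraticMap.polarBilin q))
    (hV : Module.finrank F V = 4)
    (τ : V →ₗ[F] V) (hτ : ∀ x, q (τ x) = q x)
    (hK : Module.finrank F (LinearMap.ker (τ - LinearMap.id)) = 2)
    (hiso : ∀ x ∈ LinearMap.ker (τ - LinearMap.id), q x = 0) :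
    LinearMap.ker (τ - LinearMap.id) =
      LinearMap.BilinForm.orthogonal (QuadraticMap.polarBilin q)
        (LinearMap.ker (τ - LinearMap.id)) ∧
    LinearMap.ker (τ - LinearMap.id) = LinearMap.range (τ - LinearMap.id) ∧
    (τ - LinearMap.id) ∘ₗ (τ - LinearMap.id) = 0 := by
  set K := LinearMap.ker (τ - LinearMap.id) with hK_def
  set Kperp := LinearMap.BilinForm.orthogonal (QuadraticMap.polarBilin q) K
  have hdim_orth : Module.finrank F Kperp = 2 := by
    rw [LinearMap.BilinForm.finrank_orthogonal hq K, hV, hK]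
  have hdim_range : Module.finrank F (LinearMap.range (τ - LinearMap.id)) = 2 := by
    have := LinearMap.finrank_range_add_finrank_ker (τ - LinearMap.id)
    rw [← hK_def] at this
    omega
  have hK_orth : K = Kperp :=
    Submodule.eq_of_le_of_finrank_eq (QuadraticMap.le_orthogonal_polarBilin_of_isotropic q hiso)
      (hK.trans hdim_orth.symm)
  have hrange_orth : LinearMap.range (τ - LinearMap.id) = Kperp :=
    Submodule.eq_of_le_of_finrank_eq (QuadraticMap.range_sub_id_le_orthogonal_ker q hτ)
      (hdim_range.trans hdim_orth.symm)
  have hK_range : K = LinearMap.range (τ - LinearMap.id) := hK_orth.trans hrange_orth.symm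
  exact ⟨hK_orth, hK_range, LinearMap.range_le_ker_iff.mp hK_range.ge⟩
end

section
/- Let (V,q) be a 4-dimensional nondegenerate quadratic space over a field F of characteristic different from 2, and τ an isometry. Then τ is an interchange isometry (K(τ) is 2-dimensional and totally isotropic) if and only if (τ - id)² = 0 and τ ≠ id. -/
/-! For an isometry `τ` put `σ = τ - 1` and `B = polar q`. Invariance of `B` gives
`B k (σ x) = B (τ k) (τ x) - B k x = 0` for `k ∈ ker σ`, so `range σ ⊆ (ker σ)ᗮ`; moreover
`B (σ x) x = -q (σ x)`.

If `ker σ` is a totally isotropic plane, it is its own orthogonal, so `range σ ⊆ ker σ`,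
i.e. `σ² = 0`. Conversely, if `σ² = 0` then `σ x ∈ ker σ` is orthogonal to itself, so `q`
vanishes on `range σ ⊆ ker σ`, and the rank of `σ` is at most `2`. Rank `1` is impossible:
if `range σ = ⟨σ x₀⟩` then every `y` lies in `ker σ + ⟨x₀⟩`, which is orthogonal to `σ x₀`
because `B (σ x₀) x₀ = -q (σ x₀) = 0`. Hence `range σ = ker σ` is a totally isotropic plane. -/

open LinearMap Module

namespace QuadraticMap

section CommRing

variable {R M : Type*} [CommRing R] [AddCommGroup M] [Module R M]
  {q : QuadraticForm R M} {τ : M →ₗ[R] M}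

theorem polar_map_of_forall_map_eq (hτ : ∀ x, q (τ x) = q x) (x y : M) :
    polar q (τ x) (τ y) = polar q x y := by
  simp only [polar, ← map_add, hτ]

theorem polar_map_sub_eq_zero_of_map_eq (hτ : ∀ x, q (τ x) = q x) {k : M} (hk : τ k = k)
    (x : M) : polar q k (τ x - x) = 0 := by
  rw [polar_sub_right, ← polar_map_of_forall_map_eq hτ k x, hk, sub_self]

theorem polar_map_sub_self (hτ : ∀ x, q (τ x) = q x) (x : M) :
    polar q (τ x - x) x = -q (τ x - x) := by
  rw [polar, sub_add_cancel, hτ]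
  ring

theorem map_eq_zero_of_mem_range_sub_id (h2 : IsUnit (2 : R)) (hτ : ∀ x, q (τ x) = q x)
    (hσ : (τ - LinearMap.id) ∘ₗ (τ - LinearMap.id) = 0) {y : M}
    (hy : y ∈ range (τ - LinearMap.id)) : q y = 0 := by
  obtain ⟨x, rfl⟩ := hy
  have hfix : τ (τ x - x) = τ x - x := sub_eq_zero.mp (LinearMap.congr_fun hσ x)
  have hself := polar_map_sub_eq_zero_of_map_eq hτ hfix x
  rw [polar_self, nsmul_eq_mul, Nat.cast_ofNat] at hself
  exact h2.mul_right_eq_zero.mp hself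

theorem range_sub_id_le_orthogonal_ker_s12 (hτ : ∀ x, q (τ x) = q x) :
    range (τ - LinearMap.id) ≤ BilinForm.orthogonal (polarBilin q) (ker (τ - LinearMap.id)) := by
  rintro _ ⟨x, rfl⟩ k hk
  exact polar_map_sub_eq_zero_of_map_eq hτ (sub_eq_zero.mp hk) x

theorem le_orthogonal_of_forall_mem_eq_zero {W : Submodule R M} (hW : ∀ x ∈ W, q x = 0) :
    W ≤ BilinForm.orthogonal (polarBilin q) W := by
  intro x hx y hy
  rw [polarBilin_apply_apply, polar, hW _ (add_mem hy hx), hW x hx, hW y hy, sub_zero, sub_zero]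

end CommRing

variable {F V : Type*} [Field F] [AddCommGroup V] [Module F V]
  {q : QuadraticForm F V} {τ : V →ₗ[F] V}

theorem finrank_range_sub_id_ne_one (h2 : (2 : F) ≠ 0) (hq : (polarBilin q).Nondegenerate)
    (hτ : ∀ x, q (τ x) = q x) (hσ : (τ - LinearMap.id) ∘ₗ (τ - LinearMap.id) = 0) :
    finrank F (range (τ - LinearMap.id)) ≠ 1 := by
  intro h1
  have : Module.Finite F (range (τ - LinearMap.id)) := Module.finite_of_finrank_eq_succ h1
  obtain ⟨x₀, hx₀⟩ : ∃ x, τ x - x ≠ 0 := by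
    by_contra! h
    rw [range_eq_bot.mpr (LinearMap.ext h), finrank_bot] at h1
    exact zero_ne_one h1
  have hmem : τ x₀ - x₀ ∈ range (τ - LinearMap.id) := ⟨x₀, rfl⟩
  have hspan : F ∙ (τ x₀ - x₀) = range (τ - LinearMap.id) :=
    Submodule.eq_of_le_of_finrank_eq ((Submodule.span_singleton_le_iff_mem _ _).mpr hmem)
      (by rw [finrank_span_singleton hx₀, h1])
  refine hx₀ (hq.1 _ fun y => ?_)
  obtain ⟨c, hc⟩ := Submodule.mem_span_singleton.mp
    (hspan.ge (⟨y, rfl⟩ : τ y - y ∈ range (τ - LinearMap.id)))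
  have hfix : τ (y - c • x₀) = y - c • x₀ := by
    rw [map_sub, map_smul]
    linear_combination (norm := module) -hc
  calc polarBilin q (τ x₀ - x₀) y
      = polar q (y - c • x₀) (τ x₀ - x₀) + c * polar q (τ x₀ - x₀) x₀ := by
        rw [polarBilin_apply_apply, polar_comm q (y - c • x₀), polar_sub_right, polar_smul_right,
          smul_eq_mul, sub_add_cancel]
    _ = 0 := by
      rw [polar_map_sub_eq_zero_of_map_eq hτ hfix, polar_map_sub_self hτ,
        map_eq_zero_of_mem_range_sub_id h2.isUnit hτ hσ hmem, neg_zero, mul_zero, zero_add]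

end QuadraticMap

open QuadraticMap

theorem wall_stmt12 {F V : Type*} [Field F] [AddCommGroup V] [Module F V]
    [FiniteDimensional F V] (hchar : (2 : F) ≠ 0) (q : QuadraticForm F V)
    (hq : LinearMap.BilinForm.Nondegenerate (QuadraticMap.polarBilin q))
    (hV : Module.finrank F V = 4)
    (τ : V →ₗ[F] V) (hτ : ∀ x, q (τ x) = q x) :
    (Module.finrank F (LinearMap.ker (τ - LinearMap.id)) = 2 ∧
        ∀ x ∈ LinearMap.ker (τ - LinearMap.id), q x = 0) ↔
      ((τ - LinearMap.id) ∘ₗ (τ - LinearMap.id) = 0 ∧ τ ≠ LinearMap.id) := by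
  constructor
  · rintro ⟨hdim, hiso⟩
    have hself_orth :
        ker (τ - LinearMap.id) = BilinForm.orthogonal (polarBilin q) (ker (τ - LinearMap.id)) :=
      Submodule.eq_of_le_of_finrank_eq (le_orthogonal_of_forall_mem_eq_zero hiso)
        (by rw [BilinForm.finrank_orthogonal hq, hV, hdim])
    refine ⟨range_le_ker_iff.mp (hself_orth ▸ range_sub_id_le_orthogonal_ker_s12 hτ), fun h => ?_⟩
    rw [h, sub_self, ker_zero, finrank_top, hV] at hdim
    norm_num at hdim
  · rintro ⟨hσ, hne⟩
    have hle : range (τ - LinearMap.id) ≤ ker (τ - LinearMap.id) := range_le_ker_iff.mpr hσ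
    have hpos : finrank F (range (τ - LinearMap.id)) ≠ 0 := by
      rwa [Ne, Submodule.finrank_eq_zero, range_eq_bot, sub_eq_zero]
    have hone := finrank_range_sub_id_ne_one hchar hq hτ hσ
    have hmono := Submodule.finrank_mono hle
    have hsum := finrank_range_add_finrank_ker (τ - LinearMap.id)
    have hrange : range (τ - LinearMap.id) = ker (τ - LinearMap.id) :=
      Submodule.eq_of_le_of_finrank_eq hle (by omega)
    exact ⟨by omega, fun x hx => map_eq_zero_of_mem_range_sub_id hchar.isUnit hτ hσ (hrange ▸ hx)⟩
end

section
/- Let (V,q) be a nondegenerate quadratic space over a field F and τ an isometry with (τ - id)² = 0. Let U be a 2-dimensional subspace of V. If U ⊆ R(τ) and the restriction of the Wall form ω_τ to U is a hyperbolic plane (there is a basis (x,w) of U with ω_τ(x,x) = ω_τ(w,w) = 0, ω_τ(x,w) = 1, ω_τ(w,x) = -1), then there exists a 4-dimensional regular τ-invariant subspace V' of V such that τ restricted to V' is an interchange isometry with R(τ|_{V'}) = U. -/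
/-!
Writing `x = τ a - a` and `w = τ b - b`, the Wall form conditions say that the polar form pairs
`(x, w)` against `(a, b)` through the matrix `!![0, 1; -1, 0]`. Since `τ` preserves the polar form,
`x` and `w` are isotropic and orthogonal to each other, so the Gram matrix of `(x, w, a, b)` is
zero above its antidiagonal `(1, -1, -1, 1)` and has determinant `1`. Hence
`V' = span {x, w, a, b}` is a regular `4`-dimensional subspace; `τ - 1` maps it onto
`U = span {x, w}`, which is also its fixed space and is totally isotropic.
-/

open Module Matrix
open LinearMap (BilinForm)

namespace LinearMap.BilinForm

variable {F V ι : Type*} [Field F] [AddCommGroup V] [Module F V] [Fintype ι]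

def gramMatrix (B : BilinForm F V) (e : ι → V) : Matrix ι ι F :=
  Matrix.of fun i j => B (e i) (e j)

lemma gramMatrix_mulVec (B : BilinForm F V) (e : ι → V) (c : ι → F) :
    B.gramMatrix e *ᵥ c = fun i => B (e i) (∑ j, c j • e j) := by
  ext i
  simp [gramMatrix, Matrix.mulVec, dotProduct, mul_comm]

lemma linearIndependent_of_det_gramMatrix_ne_zero [DecidableEq ι] {B : BilinForm F V}
    {e : ι → V} (h : (B.gramMatrix e).det ≠ 0) : LinearIndependent F e := by
  rw [Fintype.linearIndependent_iff]
  intro c hc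
  have : B.gramMatrix e *ᵥ c = 0 := by simp [gramMatrix_mulVec, hc, Pi.zero_def]
  simpa using congrFun (Matrix.eq_zero_of_mulVec_eq_zero h this)

lemma span_inf_orthogonal_eq_bot_of_det_gramMatrix_ne_zero [DecidableEq ι] {B : BilinForm F V}
    {e : ι → V} (h : (B.gramMatrix e).det ≠ 0) :
    Submodule.span F (Set.range e) ⊓ B.orthogonal (Submodule.span F (Set.range e)) = ⊥ := by
  rw [eq_bot_iff]
  rintro v ⟨hv, hv_orth⟩
  obtain ⟨c, rfl⟩ := (Submodule.mem_span_range_iff_exists_fun F).mp hv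
  have : B.gramMatrix e *ᵥ c = 0 := by
    ext i
    rw [gramMatrix_mulVec]
    exact (mem_orthogonal_iff.mp hv_orth) _ (Submodule.subset_span ⟨i, rfl⟩)
  simp [Matrix.eq_zero_of_mulVec_eq_zero h this]

lemma det_gramMatrix_eq_one_of_isotropic_pair {B : BilinForm F V} (hB : B.IsSymm) {x w a b : V}
    (hxx : B x x = 0) (hww : B w w = 0) (hxw : B x w = 0) (hxa : B x a = 0) (hxb : B x b = 1)
    (hwa : B w a = -1) (hwb : B w b = 0) : (B.gramMatrix ![x, w, a, b]).det = 1 := by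
  have hwx : B w x = 0 := by rw [hB.eq, hxw]
  rw [Matrix.det_succ_row_zero]
  simp [gramMatrix, Fin.sum_univ_succ, Fin.succAbove, Matrix.det_succ_row_zero, hxx, hww, hxw,
    hxa, hxb, hwa, hwb, hwx, hB.eq a x, hB.eq a w, hB.eq b x, hB.eq b w]
  norm_num

end LinearMap.BilinForm

namespace QuadraticMap

variable {R M N : Type*} [CommRing R] [AddCommGroup M] [Module R M] [AddCommGroup N] [Module R N]
  {q : QuadraticMap R M N} {τ : M →ₗ[R] M}

lemma map_sub_self_add_polar_of_isometry (hτ : ∀ v, q (τ v) = q v) (v : M) :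
    q (τ v - v) + polar q (τ v - v) v = 0 := by
  rw [polar, sub_add_cancel, hτ]
  abel

lemma polar_map_map_of_isometry (hτ : ∀ v, q (τ v) = q v) (u v : M) :
    polar q (τ u) (τ v) = polar q u v := by
  simp only [polar, ← map_add, hτ]

lemma polar_sub_self_add_polar_sub_self_add_polar_of_isometry (hτ : ∀ v, q (τ v) = q v)
    (u v : M) :
    polar q (τ u - u) v + polar q u (τ v - v) + polar q (τ u - u) (τ v - v) = 0 := by
  simp only [polar_sub_left, polar_sub_right, polar_map_map_of_isometry hτ]
  abel

lemma map_eq_zero_of_mem_span_pair {x y v : M} (hx : q x = 0) (hy : q y = 0)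
    (hxy : polar q x y = 0) (hv : v ∈ Submodule.span R {x, y}) : q v = 0 := by
  obtain ⟨s, t, rfl⟩ := Submodule.mem_span_pair.mp hv
  have hadd : q (s • x + t • y) = q (s • x) + q (t • y) + polar q (s • x) (t • y) := by
    rw [polar]; abel
  rw [hadd]
  simp [QuadraticMap.map_smul, polar_smul_left, polar_smul_right, hx, hy, hxy]

end QuadraticMap

namespace LinearMap

variable {R M : Type*} [Ring R] [AddCommGroup M] [Module R M] {f : M →ₗ[R] M} {x w a b : M}

lemma map_span_eq_span_pair (hx : f x = 0) (hw : f w = 0) (ha : f a = x) (hb : f b = w) :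
    Submodule.map f (Submodule.span R {x, w, a, b}) = Submodule.span R {x, w} := by
  simp [Submodule.map_span, Set.image_insert_eq, hx, hw, ha, hb, Submodule.span_insert_zero]

lemma ker_inf_span_eq_span_pair (hx : f x = 0) (hw : f w = 0) (ha : f a = x) (hb : f b = w)
    (hxw : LinearIndependent R ![x, w]) :
    ker f ⊓ Submodule.span R {x, w, a, b} = Submodule.span R {x, w} := by
  have hker : Submodule.span R {x, w} ≤ ker f := by
    simp [Submodule.span_le, Set.insert_subset_iff, hx, hw]
  have hsup :
      Submodule.span R {x, w, a, b} = Submodule.span R {x, w} ⊔ Submodule.span R {a, b} := by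
    rw [← Submodule.span_union, Set.insert_union, Set.singleton_union]
  refine le_antisymm ?_ (le_inf hker (Submodule.span_mono (by simp [Set.insert_subset_iff])))
  rintro v ⟨hv_ker, hv⟩
  rw [hsup] at hv
  obtain ⟨u, hu, y, hy, rfl⟩ := Submodule.mem_sup.mp hv
  obtain ⟨s, t, rfl⟩ := Submodule.mem_span_pair.mp hy
  have hst : s • x + t • w = 0 := by
    simpa [mem_ker.mp (hker hu), ha, hb] using hv_ker
  obtain ⟨rfl, rfl⟩ := LinearIndependent.pair_iff.mp hxw s t hst
  simpa using hu

end LinearMap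

open LinearMap.BilinForm QuadraticMap

theorem wall_stmt14_general {F V : Type*} [Field F] [AddCommGroup V] [Module F V]
    [FiniteDimensional F V] (q : QuadraticForm F V)
    (τ : V →ₗ[F] V) (hτ : ∀ x, q (τ x) = q x)
    (h2 : (τ - LinearMap.id) ∘ₗ (τ - LinearMap.id) = 0)
    (U : Submodule F V) (hU2 : Module.finrank F U = 2)
    (x w a b : V) (ha : τ a - a = x) (hb : τ b - b = w)
    (hspan : Submodule.span F {x, w} = U) (hind : LinearIndependent F ![x, w])
    (hxx : QuadraticMap.polarBilin q x a = 0)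
    (hww : QuadraticMap.polarBilin q w b = 0)
    (hxw : QuadraticMap.polarBilin q x b = 1)
    (hwx : QuadraticMap.polarBilin q w a = -1) :
    ∃ V' : Submodule F V, Module.finrank F V' = 4 ∧
      V' ⊓ LinearMap.BilinForm.orthogonal (QuadraticMap.polarBilin q) V' = ⊥ ∧
      (∀ v ∈ V', τ v ∈ V') ∧
      Submodule.map (τ - LinearMap.id) V' = U ∧
      Module.finrank F ↥(LinearMap.ker (τ - LinearMap.id) ⊓ V') = 2 ∧
      ∀ v ∈ LinearMap.ker (τ - LinearMap.id) ⊓ V', q v = 0 := by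
  set σ : V →ₗ[F] V := τ - LinearMap.id
  have hσa : σ a = x := ha
  have hσb : σ b = w := hb
  have hσσ : ∀ v, σ (σ v) = 0 := LinearMap.congr_fun h2
  have hσx : σ x = 0 := hσa ▸ hσσ a
  have hσw : σ w = 0 := hσb ▸ hσσ b
  rw [polarBilin_apply_apply] at hxx hww hxw hwx
  have hqx : q x = 0 := by simpa [ha, hxx] using map_sub_self_add_polar_of_isometry hτ a
  have hqw : q w = 0 := by simpa [hb, hww] using map_sub_self_add_polar_of_isometry hτ b
  have hpxw : polar q x w = 0 := by
    have := polar_sub_self_add_polar_sub_self_add_polar_of_isometry hτ a b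
    rw [ha, hb, polar_comm q a w, hxw, hwx] at this
    linear_combination this
  have hdet : (gramMatrix (polarBilin q) ![x, w, a, b]).det = 1 :=
    det_gramMatrix_eq_one_of_isotropic_pair ⟨polar_comm q⟩ (by simp [polar_self, hqx])
      (by simp [polar_self, hqw]) hpxw hxx hxw hwx hww
  have hrange : Set.range ![x, w, a, b] = {x, w, a, b} := by
    ext; simp [or_comm, or_left_comm, eq_comm]
  have hmap := LinearMap.map_span_eq_span_pair hσx hσw hσa hσb
  have hker := LinearMap.ker_inf_span_eq_span_pair hσx hσw hσa hσb hind
  rw [hspan] at hmap hker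
  have hUV : U ≤ Submodule.span F {x, w, a, b} :=
    hspan ▸ Submodule.span_mono (by simp [Set.insert_subset_iff])
  refine ⟨Submodule.span F {x, w, a, b}, ?_, ?_, fun v hv => ?_, hmap, ?_, fun v hv => ?_⟩
  · rw [← hrange, finrank_span_eq_card
      (linearIndependent_of_det_gramMatrix_ne_zero (hdet ▸ one_ne_zero))]
    simp
  · rw [← hrange]
    exact span_inf_orthogonal_eq_bot_of_det_gramMatrix_ne_zero (hdet ▸ one_ne_zero)
  · have hσv : σ v ∈ U := hmap ▸ Submodule.mem_map_of_mem hv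
    simpa [σ] using add_mem (hUV hσv) hv
  · rw [hker, hU2]
  · rw [hker, ← hspan] at hv
    exact map_eq_zero_of_mem_span_pair hqx hqw hpxw hv

theorem wall_stmt14 {F V : Type*} [Field F] [AddCommGroup V] [Module F V]
    [FiniteDimensional F V] (q : QuadraticForm F V)
    (hq : LinearMap.BilinForm.Nondegenerate (QuadraticMap.polarBilin q))
    (τ : V →ₗ[F] V) (hτ : ∀ x, q (τ x) = q x)
    (h2 : (τ - LinearMap.id) ∘ₗ (τ - LinearMap.id) = 0)
    (U : Submodule F V) (hU2 : Module.finrank F U = 2)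
    (hUR : U ≤ LinearMap.range (τ - LinearMap.id))
    (x w a b : V) (ha : τ a - a = x) (hb : τ b - b = w)
    (hspan : Submodule.span F {x, w} = U) (hind : LinearIndependent F ![x, w])
    (hxx : QuadraticMap.polarBilin q x a = 0)
    (hww : QuadraticMap.polarBilin q w b = 0)
    (hxw : QuadraticMap.polarBilin q x b = 1)
    (hwx : QuadraticMap.polarBilin q w a = -1) :
    ∃ V' : Submodule F V, Module.finrank F V' = 4 ∧
      V' ⊓ LinearMap.BilinForm.orthogonal (QuadraticMap.polarBilin q) V' = ⊥ ∧
      (∀ v ∈ V', τ v ∈ V') ∧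
      Submodule.map (τ - LinearMap.id) V' = U ∧
      Module.finrank F ↥(LinearMap.ker (τ - LinearMap.id) ⊓ V') = 2 ∧
      ∀ v ∈ LinearMap.ker (τ - LinearMap.id) ⊓ V', q v = 0 :=
  wall_stmt14_general q τ hτ h2 U hU2 x w a b ha hb hspan hind hxx hww hxw hwx
end

section
/- Let (V,q) be a nondegenerate quadratic space over a field F and τ an isometry with (τ - id)² = 0 whose Wall form ω_τ is alternating (ω_τ(u,u) = 0 for all u ∈ R(τ)). Then dim R(τ) is even, and V decomposes as an orthogonal direct sum V = W ⊥ V₁ ⊥ ⋯ ⊥ V_m of τ-invariant regular subspaces where m = (dim R(τ))/2, τ|_W = id, each V_i is 4-dimensional, and each τ|_{V_i} is an interchange isometry. -/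
open LinearMap Module QuadraticMap

section WallHelpers

variable {F V : Type*} [Field F] [AddCommGroup V] [Module F V]

theorem wallPolarEq (q : QuadraticForm F V) (x y : V) :
    polarBilin q x y = q (x + y) - q x - q y := by
  simp [polarBilin_apply_apply, QuadraticMap.polar, sub_sub]

theorem wallSymm (q : QuadraticForm F V) (x y : V) :
    polarBilin q x y = polarBilin q y x := by
  simp [polarBilin_apply_apply, QuadraticMap.polar_comm]

theorem wallRefl (q : QuadraticForm F V) : (polarBilin q).IsRefl := by
  intro x y h; rwa [wallSymm]

variable {q : QuadraticForm F V} {τ : V →ₗ[F] V}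

theorem wallQ0 (hτ : ∀ x, q (τ x) = q x)
    (halt : ∀ y : V, polarBilin q (τ y - y) y = 0) (x : V) : q (τ x - x) = 0 := by
  have h := wallPolarEq q (τ x - x) x
  rw [sub_add_cancel, halt x, hτ x] at h
  linear_combination h

theorem wallRR (hτ : ∀ x, q (τ x) = q x)
    (halt : ∀ y : V, polarBilin q (τ y - y) y = 0) (x y : V) :
    polarBilin q (τ x - x) (τ y - y) = 0 := by
  rw [wallPolarEq]
  have e : (τ x - x) + (τ y - y) = τ (x + y) - (x + y) := by rw [map_add]; abel
  rw [e, wallQ0 hτ halt, wallQ0 hτ halt, wallQ0 hτ halt]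
  ring

theorem wallIso (hτ : ∀ x, q (τ x) = q x) (x y : V) :
    polarBilin q (τ x) (τ y) = polarBilin q x y := by
  rw [wallPolarEq, wallPolarEq, ← map_add, hτ, hτ, hτ]

theorem wallSkew (hτ : ∀ x, q (τ x) = q x)
    (halt : ∀ y : V, polarBilin q (τ y - y) y = 0) (x y : V) :
    polarBilin q (τ x - x) y = - polarBilin q x (τ y - y) := by
  have h1 := wallIso hτ x y
  rw [show τ x = (τ x - x) + x from (sub_add_cancel _ _).symm,
    show τ y = (τ y - y) + y from (sub_add_cancel _ _).symm] at h1
  simp only [map_add, LinearMap.add_apply] at h1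
  have h2 := wallRR hτ halt x y
  linear_combination h1 - h2

end WallHelpers

universe uF uV

set_option maxHeartbeats 2000000 in
theorem wall_aux : ∀ (n : ℕ) {F : Type uF} {V : Type uV} [Field F] [AddCommGroup V]
    [Module F V] [FiniteDimensional F V] (q : QuadraticForm F V)
    (hq : LinearMap.BilinForm.Nondegenerate (QuadraticMap.polarBilin q))
    (τ : V →ₗ[F] V) (hτ : ∀ x, q (τ x) = q x)
    (h2 : (τ - LinearMap.id) ∘ₗ (τ - LinearMap.id) = 0)
    (halt : ∀ y : V, QuadraticMap.polarBilin q (τ y - y) y = 0)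
    (hn : Module.finrank F (LinearMap.range (τ - LinearMap.id)) = n),
    ∃ (m : ℕ) (W : Submodule F V) (Vs : Fin m → Submodule F V),
      2 * m = Module.finrank F (LinearMap.range (τ - LinearMap.id)) ∧
      W ⊔ (⨆ i, Vs i) = ⊤ ∧
      (∀ i, ∀ x ∈ W, ∀ y ∈ Vs i, QuadraticMap.polarBilin q x y = 0) ∧
      (∀ i j, i ≠ j → ∀ x ∈ Vs i, ∀ y ∈ Vs j, QuadraticMap.polarBilin q x y = 0) ∧
      W ⊓ LinearMap.BilinForm.orthogonal (QuadraticMap.polarBilin q) W = ⊥ ∧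
      (∀ i, Vs i ⊓ LinearMap.BilinForm.orthogonal (QuadraticMap.polarBilin q) (Vs i) = ⊥) ∧
      (∀ x ∈ W, τ x = x) ∧
      (∀ i, ∀ x ∈ Vs i, τ x ∈ Vs i) ∧
      (∀ i, Module.finrank F (Vs i) = 4) ∧
      (∀ i, Module.finrank F ↥(LinearMap.ker (τ - LinearMap.id) ⊓ Vs i) = 2) ∧
      (∀ i, ∀ v ∈ LinearMap.ker (τ - LinearMap.id) ⊓ Vs i, q v = 0) := by
  intro n
  induction n using Nat.strong_induction_on with
  | _ n IH =>
  intro F V _ _ _ _ q hq τ hτ h2 halt hn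
  by_cases hR0 : LinearMap.range (τ - (LinearMap.id : V →ₗ[F] V)) = ⊥
  · -- τ = id case
    have hid : ∀ x : V, τ x = x := by
      intro x
      have : (τ - LinearMap.id : V →ₗ[F] V) x ∈ (⊥ : Submodule F V) := hR0 ▸ LinearMap.mem_range_self _ x
      simp only [Submodule.mem_bot, LinearMap.sub_apply, LinearMap.id_apply, sub_eq_zero] at this
      exact this
    refine ⟨0, ⊤, fun i => i.elim0, ?_, ?_, fun i => i.elim0, fun i => i.elim0, ?_,
      fun i => i.elim0, fun x _ => hid x, fun i => i.elim0, fun i => i.elim0,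
      fun i => i.elim0, fun i => i.elim0⟩
    · rw [hR0]; simp
    · simp
    · rw [LinearMap.BilinForm.orthogonal_top_eq_bot hq]; simp
  · -- main case
    obtain ⟨x, hx⟩ : ∃ x : V, τ x - x ≠ 0 := by
      by_contra h
      push_neg at h
      refine hR0 (LinearMap.range_eq_bot.mpr (LinearMap.ext fun z => ?_))
      simpa [LinearMap.sub_apply] using h z
    obtain ⟨z0, hz0⟩ : ∃ z, QuadraticMap.polarBilin q (τ x - x) z ≠ 0 := by
      by_contra h; push_neg at h; exact hx (hq.1 _ h)
    set u : V := τ x - x with hu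
    set y : V := (QuadraticMap.polarBilin q (τ x - x) z0)⁻¹ • z0 with hy
    set v : V := τ y - y with hv
    have hττ : ∀ a : V, τ (τ a - a) = τ a - a := by
      intro a
      have h := LinearMap.ext_iff.mp h2 a
      simp only [LinearMap.comp_apply, LinearMap.sub_apply, LinearMap.id_apply,
        LinearMap.zero_apply] at h
      exact sub_eq_zero.mp h
    have hτu : τ u = u := hττ x
    have hτv : τ v = v := hττ y
    have hτx : τ x = x + u := by rw [hu]; abel
    have hτy : τ y = y + v := by rw [hv]; abel
    have hqu : q u = 0 := wallQ0 hτ halt x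
    have hqv : q v = 0 := wallQ0 hτ halt y
    have Buy : QuadraticMap.polarBilin q u y = 1 := by
      rw [hy, hu, _root_.map_smul, smul_eq_mul, inv_mul_cancel₀ hz0]
    have Bux : QuadraticMap.polarBilin q u x = 0 := halt x
    have Bvy : QuadraticMap.polarBilin q v y = 0 := halt y
    have Buu : QuadraticMap.polarBilin q u u = 0 := wallRR hτ halt x x
    have Buv : QuadraticMap.polarBilin q u v = 0 := wallRR hτ halt x y
    have Bvu : QuadraticMap.polarBilin q v u = 0 := wallRR hτ halt y x
    have Bvv : QuadraticMap.polarBilin q v v = 0 := wallRR hτ halt y y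
    have Byu : QuadraticMap.polarBilin q y u = 1 := (wallSymm q y u).trans Buy
    have Bxu : QuadraticMap.polarBilin q x u = 0 := (wallSymm q x u).trans Bux
    have Bvx : QuadraticMap.polarBilin q v x = -1 := by
      have h1 : QuadraticMap.polarBilin q v x = - QuadraticMap.polarBilin q y u :=
        wallSkew hτ halt y x
      rw [h1, Byu]
    have Bxv : QuadraticMap.polarBilin q x v = -1 := (wallSymm q x v).trans Bvx
    have Byv : QuadraticMap.polarBilin q y v = 0 := (wallSymm q y v).trans Bvy
    set b4 : Fin 4 → V := ![u, v, x, y] with hb4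
    set V₁ : Submodule F V := Submodule.span F (Set.range b4) with hV₁
    have hmu : u ∈ V₁ := Submodule.subset_span ⟨0, rfl⟩
    have hmv : v ∈ V₁ := Submodule.subset_span ⟨1, rfl⟩
    have hmx : x ∈ V₁ := Submodule.subset_span ⟨2, rfl⟩
    have hmy : y ∈ V₁ := Submodule.subset_span ⟨3, rfl⟩
    have hrep : ∀ w ∈ V₁, ∃ a b c d : F, w = a • u + b • v + c • x + d • y := by
      intro w hw
      rw [hV₁, Submodule.mem_span_range_iff_exists_fun] at hw
      obtain ⟨cf, hcf⟩ := hw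
      rw [Fin.sum_univ_four] at hcf
      exact ⟨cf 0, cf 1, cf 2, cf 3, hcf.symm⟩
    have pair_u : ∀ a b c d : F,
        QuadraticMap.polarBilin q (a • u + b • v + c • x + d • y) u = d := by
      intro a b c d
      simp [map_add, _root_.map_smul, LinearMap.add_apply, LinearMap.smul_apply, smul_eq_mul,
        Buu, Bvu, Bxu, Byu]
    have pair_v : ∀ a b c d : F,
        QuadraticMap.polarBilin q (a • u + b • v + c • x + d • y) v = -c := by
      intro a b c d
      simp [map_add, _root_.map_smul, LinearMap.add_apply, LinearMap.smul_apply, smul_eq_mul,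
        Buv, Bvv, Bxv, Byv]
    have pair_x : ∀ a b c d : F,
        QuadraticMap.polarBilin q (a • u + b • v + c • x + d • y) x =
          -b + c * QuadraticMap.polarBilin q x x + d * QuadraticMap.polarBilin q y x := by
      intro a b c d
      simp only [map_add, _root_.map_smul, LinearMap.add_apply, LinearMap.smul_apply, smul_eq_mul,
        Bux, Bvx]
      ring
    have pair_y : ∀ a b c d : F,
        QuadraticMap.polarBilin q (a • u + b • v + c • x + d • y) y =
          a + c * QuadraticMap.polarBilin q x y + d * QuadraticMap.polarBilin q y y := by
      intro a b c d
      simp only [map_add, _root_.map_smul, LinearMap.add_apply, LinearMap.smul_apply, smul_eq_mul,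
        Buy, Bvy]
      ring
    have hzero : ∀ a b c d : F,
        QuadraticMap.polarBilin q (a • u + b • v + c • x + d • y) u = 0 →
        QuadraticMap.polarBilin q (a • u + b • v + c • x + d • y) v = 0 →
        QuadraticMap.polarBilin q (a • u + b • v + c • x + d • y) x = 0 →
        QuadraticMap.polarBilin q (a • u + b • v + c • x + d • y) y = 0 →
        a = 0 ∧ b = 0 ∧ c = 0 ∧ d = 0 := by
      intro a b c d h1 h2' h3 h4
      rw [pair_u] at h1
      rw [pair_v] at h2'
      rw [pair_x] at h3
      rw [pair_y] at h4
      have hc : c = 0 := by linear_combination -h2'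
      subst h1; subst hc
      simp only [zero_mul, add_zero, mul_zero] at h3 h4
      refine ⟨h4, ?_, rfl, rfl⟩
      linear_combination -h3
    have hindep : LinearIndependent F b4 := by
      rw [Fintype.linearIndependent_iff]
      intro g hg
      rw [Fin.sum_univ_four] at hg
      have hg' : g 0 • u + g 1 • v + g 2 • x + g 3 • y = 0 := hg
      obtain ⟨h0, h1, h2', h3⟩ := hzero _ _ _ _
        (by rw [hg']; simp) (by rw [hg']; simp) (by rw [hg']; simp) (by rw [hg']; simp)
      intro i; fin_cases i <;> assumption
    have hfr4 : Module.finrank F V₁ = 4 := by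
      rw [hV₁, finrank_span_eq_card hindep]; simp
    have hτV₁ : ∀ w ∈ V₁, τ w ∈ V₁ := by
      intro w hw
      obtain ⟨a, b, c, d, rfl⟩ := hrep w hw
      rw [map_add, map_add, map_add, _root_.map_smul, _root_.map_smul, _root_.map_smul, _root_.map_smul,
        hτu, hτv, hτx, hτy]
      exact Submodule.add_mem _ (Submodule.add_mem _ (Submodule.add_mem _
        (Submodule.smul_mem _ _ hmu) (Submodule.smul_mem _ _ hmv))
        (Submodule.smul_mem _ _ (Submodule.add_mem _ hmx hmu)))
        (Submodule.smul_mem _ _ (Submodule.add_mem _ hmy hmv))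
    have hnd1 : (LinearMap.BilinForm.restrict (QuadraticMap.polarBilin q) V₁).Nondegenerate := by
      refine LinearMap.BilinForm.Nondegenerate.ofSeparatingLeft ?_
      rintro ⟨w, hw⟩ hwz
      obtain ⟨a, b, c, d, hwrep⟩ := hrep w hw
      have e : ∀ t, ∀ ht : t ∈ V₁, QuadraticMap.polarBilin q w t = 0 := fun t ht => hwz ⟨t, ht⟩
      obtain ⟨h0, h1, h2', h3⟩ := hzero a b c d
        (by rw [← hwrep]; exact e u hmu) (by rw [← hwrep]; exact e v hmv)
        (by rw [← hwrep]; exact e x hmx) (by rw [← hwrep]; exact e y hmy)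
      apply Subtype.ext
      show w = 0
      rw [hwrep, h0, h1, h2', h3]
      simp
    have hcompl : IsCompl V₁ (LinearMap.BilinForm.orthogonal (QuadraticMap.polarBilin q) V₁) :=
      LinearMap.BilinForm.isCompl_orthogonal_of_restrict_nondegenerate (wallRefl q) hnd1
    set K : Submodule F V := LinearMap.BilinForm.orthogonal (QuadraticMap.polarBilin q) V₁ with hK
    have hτK : ∀ w ∈ K, τ w ∈ K := by
      intro w hw z hz
      show QuadraticMap.polarBilin q z (τ w) = 0
      have hz' : z + z - τ z ∈ V₁ :=
        Submodule.sub_mem _ (Submodule.add_mem _ hz hz) (hτV₁ z hz)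
      have hτσ : τ (z + z - τ z) = z := by
        have h := hττ z
        rw [_root_.map_sub] at h
        have h' : τ (τ z) = τ z - z + τ z := sub_eq_iff_eq_add.mp h
        rw [_root_.map_sub, _root_.map_add, h']
        abel
      calc QuadraticMap.polarBilin q z (τ w)
          = QuadraticMap.polarBilin q (τ (z + z - τ z)) (τ w) := by rw [hτσ]
        _ = QuadraticMap.polarBilin q (z + z - τ z) w := wallIso hτ _ _
        _ = 0 := hw _ hz'
    set τ' : K →ₗ[F] K := τ.restrict hτK with hτ'def
    set q' : QuadraticForm F K := q.comp K.subtype with hq'def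
    have hB' : ∀ a b : K, QuadraticMap.polarBilin q' a b
        = QuadraticMap.polarBilin q (a : V) (b : V) := by
      intro a b; simp [hq'def, QuadraticMap.polarBilin_comp]
    have hcoe_sub : ∀ w : K, (((τ' - (LinearMap.id : K →ₗ[F] K)) w : K) : V) = τ (w : V) - (w : V) := by
      intro w
      simp [hτ'def, LinearMap.sub_apply, LinearMap.restrict_coe_apply]
    have hq'nd : LinearMap.BilinForm.Nondegenerate (QuadraticMap.polarBilin q') := by
      refine LinearMap.BilinForm.Nondegenerate.ofSeparatingLeft ?_
      intro w hw
      apply Subtype.ext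
      show (w : V) = 0
      apply hq.1
      intro t
      have ht : t ∈ V₁ ⊔ K := by rw [hcompl.sup_eq_top]; trivial
      obtain ⟨t₁, ht₁, t₂, ht₂, rfl⟩ := Submodule.mem_sup.mp ht
      rw [map_add]
      have e1 : QuadraticMap.polarBilin q (w : V) t₁ = 0 :=
        (wallSymm q _ _).trans (w.2 t₁ ht₁)
      have e2 : QuadraticMap.polarBilin q (w : V) t₂ = 0 := by
        rw [← hB' w ⟨t₂, ht₂⟩]; exact hw ⟨t₂, ht₂⟩
      rw [e1, e2, add_zero]
    have hτ'iso : ∀ w : K, q' (τ' w) = q' w := fun w => hτ (w : V)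
    have h2' : (τ' - LinearMap.id) ∘ₗ (τ' - LinearMap.id) = 0 := by
      apply LinearMap.ext; intro w; apply Subtype.ext
      have h := LinearMap.ext_iff.mp h2 (w : V)
      simp only [LinearMap.comp_apply, LinearMap.sub_apply, LinearMap.id_apply,
        LinearMap.zero_apply] at h ⊢
      simp only [hτ'def, AddSubgroupClass.coe_sub, LinearMap.restrict_coe_apply,
        ZeroMemClass.coe_zero]
      simpa using h
    have halt' : ∀ w : K, QuadraticMap.polarBilin q' (τ' w - w) w = 0 := by
      intro w
      rw [hB']
      have hc : ((τ' w - w : K) : V) = τ (w : V) - (w : V) := by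
        simp only [hτ'def, AddSubgroupClass.coe_sub, LinearMap.restrict_coe_apply]
      rw [hc]
      exact halt (w : V)
    -- rank computations
    have huR : u ∈ LinearMap.range (τ - LinearMap.id) := ⟨x, by simp [LinearMap.sub_apply, hu]⟩
    have hvR : v ∈ LinearMap.range (τ - LinearMap.id) := ⟨y, by simp [LinearMap.sub_apply, hv]⟩
    set R : Submodule F V := LinearMap.range (τ - LinearMap.id) with hRdef
    set g : V →ₗ[F] F × F :=
      LinearMap.prod ((QuadraticMap.polarBilin q).flip x) ((QuadraticMap.polarBilin q).flip y)
      with hg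
    have hgval : ∀ w : V, g w = (QuadraticMap.polarBilin q w x, QuadraticMap.polarBilin q w y) :=
      fun w => rfl
    set g' : R →ₗ[F] F × F := g.domRestrict R with hg'
    have hg'val : ∀ w : R, g' w
        = (QuadraticMap.polarBilin q (w : V) x, QuadraticMap.polarBilin q (w : V) y) :=
      fun w => rfl
    have hres : LinearMap.range g' = ⊤ := by
      rw [eq_top_iff]
      rintro ⟨a, b⟩ -
      refine ⟨b • ⟨u, huR⟩ - a • ⟨v, hvR⟩, ?_⟩
      have e1 : g' ⟨u, huR⟩ = ((0 : F), (1 : F)) := by rw [hg'val]; rw [Bux, Buy]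
      have e2 : g' ⟨v, hvR⟩ = ((-1 : F), (0 : F)) := by rw [hg'val]; rw [Bvx, Bvy]
      rw [_root_.map_sub, _root_.map_smul, _root_.map_smul, e1, e2]
      rw [Prod.ext_iff]
      constructor <;> simp
    have hkermap : Submodule.map R.subtype (LinearMap.ker g') = R ⊓ K := by
      apply le_antisymm
      · rintro w hw
        obtain ⟨⟨w, hwR⟩, hker, rfl⟩ := hw
        have hker' : g' ⟨w, hwR⟩ = 0 := hker
        rw [hg'val, Prod.ext_iff] at hker'
        obtain ⟨hk1, hk2⟩ := hker'
        refine Submodule.mem_inf.mpr ⟨hwR, ?_⟩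
        have key : ∀ s ∈ Set.range b4, QuadraticMap.polarBilin q s (R.subtype ⟨w, hwR⟩) = 0 := by
          rintro s ⟨i, rfl⟩
          obtain ⟨aw, haw⟩ := id hwR
          have hwform : (R.subtype ⟨w, hwR⟩ : V) = τ aw - aw := by
            rw [show (R.subtype ⟨w, hwR⟩ : V) = w from rfl, ← haw]
            simp [LinearMap.sub_apply]
          fin_cases i
          · show QuadraticMap.polarBilin q u _ = 0
            rw [hwform, hu]; exact wallRR hτ halt x aw
          · show QuadraticMap.polarBilin q v _ = 0
            rw [hwform, hv]; exact wallRR hτ halt y aw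
          · show QuadraticMap.polarBilin q x _ = 0
            exact (wallSymm q x _).trans hk1
          · show QuadraticMap.polarBilin q y _ = 0
            exact (wallSymm q y _).trans hk2
        intro t ht
        rw [hV₁] at ht
        refine Submodule.span_induction key ?_ ?_ ?_ ht
        · show QuadraticMap.polarBilin q 0 _ = 0
          simp
        · intro s t hs ht hps hpt
          have hps' : QuadraticMap.polarBilin q s _ = 0 := hps
          have hpt' : QuadraticMap.polarBilin q t _ = 0 := hpt
          show QuadraticMap.polarBilin q (s + t) _ = 0
          rw [map_add, LinearMap.add_apply, hps', hpt', add_zero]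
        · intro a s hs hps
          have hps' : QuadraticMap.polarBilin q s _ = 0 := hps
          show QuadraticMap.polarBilin q (a • s) _ = 0
          rw [_root_.map_smul, LinearMap.smul_apply, hps', smul_zero]
      · rintro w hw
        obtain ⟨hwR, hwK⟩ := Submodule.mem_inf.mp hw
        refine ⟨⟨w, hwR⟩, ?_, rfl⟩
        show g' ⟨w, hwR⟩ = 0
        rw [hg'val, Prod.ext_iff]
        exact ⟨(wallSymm q w x).trans (hwK x hmx), (wallSymm q w y).trans (hwK y hmy)⟩
    have hnk : n = Module.finrank F ↥(R ⊓ K) + 2 := by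
      have h1 := LinearMap.finrank_range_add_finrank_ker g'
      rw [hres, finrank_top] at h1
      have h2f : Module.finrank F (F × F) = 2 := by simp
      have h3 : Module.finrank F ↥(LinearMap.ker g') = Module.finrank F ↥(R ⊓ K) := by
        rw [← hkermap, Submodule.finrank_map_subtype_eq]
      rw [h2f, h3, hn] at h1
      omega
    have hrange' : Submodule.map K.subtype
        (LinearMap.range (τ' - (LinearMap.id : K →ₗ[F] K))) = R ⊓ K := by
      apply le_antisymm
      · rintro w hw
        obtain ⟨w', hw', rfl⟩ := hw
        obtain ⟨z, rfl⟩ := hw'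
        refine Submodule.mem_inf.mpr ⟨?_, ?_⟩
        · refine ⟨(z : V), ?_⟩
          rw [show (K.subtype ((τ' - (LinearMap.id : K →ₗ[F] K)) z) : V)
            = ((((τ' - (LinearMap.id : K →ₗ[F] K)) z : K)) : V) from rfl, hcoe_sub z]
          simp [LinearMap.sub_apply]
        · exact ((τ' - (LinearMap.id : K →ₗ[F] K)) z).2
      · rintro w hw
        obtain ⟨hwR, hwK⟩ := Submodule.mem_inf.mp hw
        obtain ⟨z, hz⟩ := hwR
        have hzw : τ z - z = w := by rw [← hz]; simp [LinearMap.sub_apply]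
        have hzmem : z ∈ V₁ ⊔ K := by rw [hcompl.sup_eq_top]; trivial
        obtain ⟨z₁, hz₁, z₂, hz₂, rfl⟩ := Submodule.mem_sup.mp hzmem
        have hA : τ z₁ - z₁ ∈ V₁ := Submodule.sub_mem _ (hτV₁ z₁ hz₁) hz₁
        have hB2 : τ z₂ - z₂ ∈ K := Submodule.sub_mem _ (hτK z₂ hz₂) hz₂
        have hsum : τ z₁ - z₁ = w - (τ z₂ - z₂) := by
          rw [← hzw, _root_.map_add]; abel
        have hAK : τ z₁ - z₁ ∈ K := by rw [hsum]; exact Submodule.sub_mem _ hwK hB2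
        have h0 : τ z₁ - z₁ = 0 := by
          have hmem : τ z₁ - z₁ ∈ V₁ ⊓ K := Submodule.mem_inf.mpr ⟨hA, hAK⟩
          rw [disjoint_iff.mp hcompl.disjoint] at hmem
          exact (Submodule.mem_bot F).mp hmem
        refine ⟨(τ' - (LinearMap.id : K →ₗ[F] K)) ⟨z₂, hz₂⟩, ⟨⟨z₂, hz₂⟩, rfl⟩, ?_⟩
        rw [show (K.subtype ((τ' - (LinearMap.id : K →ₗ[F] K)) ⟨z₂, hz₂⟩) : V)
          = ((((τ' - (LinearMap.id : K →ₗ[F] K)) ⟨z₂, hz₂⟩ : K)) : V) from rfl, hcoe_sub]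
        rw [← hzw, _root_.map_add]
        rw [show τ z₁ + τ z₂ - (z₁ + z₂) = (τ z₁ - z₁) + (τ z₂ - z₂) by abel, h0, zero_add]
    have hk' : Module.finrank F
        ↥(LinearMap.range (τ' - (LinearMap.id : K →ₗ[F] K))) = Module.finrank F ↥(R ⊓ K) := by
      rw [← hrange', Submodule.finrank_map_subtype_eq]
    obtain ⟨m', W', Vs', hc1, hc2, hc3, hc4, hc5, hc6, hc7, hc8, hc9, hc10, hc11⟩ :=
      IH (Module.finrank F ↥(R ⊓ K)) (by omega) q' hq'nd τ' hτ'iso h2' halt' hk'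
    -- preparation for kernel pieces
    have hindep2 : ∀ a b : F, a • u + b • v = 0 → a = 0 ∧ b = 0 := by
      intro a b hab
      have hab' : a • u + b • v + (0 : F) • x + (0 : F) • y = 0 := by
        rw [zero_smul, zero_smul, add_zero, add_zero, hab]
      obtain ⟨h0, h1, -, -⟩ := hzero a b 0 0
        (by rw [hab']; simp) (by rw [hab']; simp) (by rw [hab']; simp) (by rw [hab']; simp)
      exact ⟨h0, h1⟩
    set K₂ : Submodule F V := Submodule.span F (Set.range ![u, v]) with hK₂
    have hmu2 : u ∈ K₂ := Submodule.subset_span ⟨0, rfl⟩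
    have hmv2 : v ∈ K₂ := Submodule.subset_span ⟨1, rfl⟩
    have hkerV₁ : LinearMap.ker (τ - LinearMap.id) ⊓ V₁ = K₂ := by
      apply le_antisymm
      · rintro w hw
        obtain ⟨hwk, hwV⟩ := Submodule.mem_inf.mp hw
        obtain ⟨a, b, c, d, rfl⟩ := hrep w hwV
        have hwk' : τ (a • u + b • v + c • x + d • y) - (a • u + b • v + c • x + d • y) = 0 := by
          have h := LinearMap.mem_ker.mp hwk
          simpa [LinearMap.sub_apply] using h
        have hcd : c • u + d • v = 0 := by
          rw [map_add, map_add, map_add, _root_.map_smul, _root_.map_smul, _root_.map_smul,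
            _root_.map_smul, hτu, hτv, hτx, hτy, smul_add, smul_add] at hwk'
          calc c • u + d • v
              = a • u + b • v + (c • x + c • u) + (d • y + d • v)
                - (a • u + b • v + c • x + d • y) := by abel
            _ = 0 := hwk'
        obtain ⟨hc0, hd0⟩ := hindep2 c d hcd
        rw [hc0, hd0, zero_smul, zero_smul, add_zero, add_zero]
        exact Submodule.add_mem _ (Submodule.smul_mem _ _ hmu2) (Submodule.smul_mem _ _ hmv2)
      · rw [hK₂, Submodule.span_le]
        rintro s ⟨i, rfl⟩
        fin_cases i
        · refine Submodule.mem_inf.mpr ⟨LinearMap.mem_ker.mpr ?_, hmu⟩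
          simp [LinearMap.sub_apply, hτu]
        · refine Submodule.mem_inf.mpr ⟨LinearMap.mem_ker.mpr ?_, hmv⟩
          simp [LinearMap.sub_apply, hτv]
    have hindep2' : LinearIndependent F ![u, v] := by
      rw [Fintype.linearIndependent_iff]
      intro g hg
      rw [Fin.sum_univ_two] at hg
      obtain ⟨h0, h1⟩ := hindep2 _ _ hg
      intro i; fin_cases i <;> assumption
    have hfrK₂ : Module.finrank F K₂ = 2 := by
      rw [hK₂, finrank_span_eq_card hindep2']; simp
    have hqK₂ : ∀ w ∈ K₂, q w = 0 := by
      intro w hw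
      rw [hK₂, Submodule.mem_span_range_iff_exists_fun] at hw
      obtain ⟨cf, hcf⟩ := hw
      rw [Fin.sum_univ_two] at hcf
      have hcf' : cf 0 • u + cf 1 • v = w := hcf
      have hpol := wallPolarEq q (cf 0 • u) (cf 1 • v)
      have h1 : q (cf 0 • u) = 0 := by
        rw [QuadraticMap.map_smul, hqu, smul_zero]
      have h2q : q (cf 1 • v) = 0 := by
        rw [QuadraticMap.map_smul, hqv, smul_zero]
      have h3 : QuadraticMap.polarBilin q (cf 0 • u) (cf 1 • v) = 0 := by
        simp only [_root_.map_smul, LinearMap.smul_apply, Buv, smul_zero]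
      rw [h3, h1, h2q] at hpol
      rw [← hcf']
      linear_combination -hpol
    have hkersucc : ∀ i0 : Fin m',
        LinearMap.ker (τ - LinearMap.id) ⊓ Submodule.map K.subtype (Vs' i0)
          = Submodule.map K.subtype (LinearMap.ker (τ' - (LinearMap.id : K →ₗ[F] K)) ⊓ Vs' i0) := by
      intro i0
      apply le_antisymm
      · rintro w hw
        obtain ⟨hwk, hwm⟩ := Submodule.mem_inf.mp hw
        obtain ⟨w₀, hw₀, rfl⟩ := hwm
        refine Submodule.mem_map_of_mem (Submodule.mem_inf.mpr ⟨LinearMap.mem_ker.mpr ?_, hw₀⟩)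
        apply Subtype.ext
        rw [show (((τ' - (LinearMap.id : K →ₗ[F] K)) w₀ : K) : V)
          = τ (w₀ : V) - (w₀ : V) from hcoe_sub w₀]
        have h := LinearMap.mem_ker.mp hwk
        simpa [LinearMap.sub_apply] using h
      · rintro w hw
        obtain ⟨w₀, hw₀, rfl⟩ := hw
        obtain ⟨hk0, hv0⟩ := Submodule.mem_inf.mp hw₀
        refine Submodule.mem_inf.mpr ⟨LinearMap.mem_ker.mpr ?_, Submodule.mem_map_of_mem hv0⟩
        have h : (((τ' - (LinearMap.id : K →ₗ[F] K)) w₀ : K) : V) = 0 := by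
          rw [LinearMap.mem_ker.mp hk0]; rfl
        rw [hcoe_sub w₀] at h
        simpa [LinearMap.sub_apply] using h
    -- assembly
    refine ⟨m' + 1, Submodule.map K.subtype W',
      Fin.cons V₁ (fun i => Submodule.map K.subtype (Vs' i)),
      ?_, ?_, ?_, ?_, ?_, ?_, ?_, ?_, ?_, ?_, ?_⟩
    · rw [← hc1] at hk'
      omega
    · have hsup : (⨆ i, (Fin.cons V₁ (fun i => Submodule.map K.subtype (Vs' i))
          : Fin (m' + 1) → Submodule F V) i)
          = V₁ ⊔ ⨆ i, Submodule.map K.subtype (Vs' i) := by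
        apply le_antisymm
        · apply iSup_le
          intro i
          rcases Fin.eq_zero_or_eq_succ i with rfl | ⟨j, rfl⟩
          · simp only [Fin.cons_zero]
            exact le_sup_left
          · simp only [Fin.cons_succ]
            exact le_sup_of_le_right (le_iSup (fun i => Submodule.map K.subtype (Vs' i)) j)
        · refine sup_le ?_ (iSup_le fun j => ?_)
          · exact le_iSup_of_le 0 (le_of_eq rfl)
          · refine le_iSup_of_le j.succ ?_
            rw [Fin.cons_succ]
      rw [hsup, sup_left_comm, ← Submodule.map_iSup, ← Submodule.map_sup, hc2,
        Submodule.map_subtype_top]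
      exact hcompl.sup_eq_top
    · intro i
      rcases Fin.eq_zero_or_eq_succ i with rfl | ⟨j, rfl⟩
      · intro a ha b hb
        simp only [Fin.cons_zero] at hb
        have haK : a ∈ K := Submodule.map_subtype_le K W' ha
        exact (wallSymm q a b).trans (haK b hb)
      · intro a ha b hb
        simp only [Fin.cons_succ] at hb
        obtain ⟨a₀, ha₀, rfl⟩ := ha
        obtain ⟨b₀, hb₀, rfl⟩ := hb
        have h := hc3 j a₀ ha₀ b₀ hb₀
        rwa [hB'] at h
    · intro i j hij
      rcases Fin.eq_zero_or_eq_succ i with rfl | ⟨i', rfl⟩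
      · rcases Fin.eq_zero_or_eq_succ j with rfl | ⟨j', rfl⟩
        · exact absurd rfl hij
        · intro a ha b hb
          simp only [Fin.cons_zero] at ha
          simp only [Fin.cons_succ] at hb
          have hbK : b ∈ K := Submodule.map_subtype_le K (Vs' j') hb
          exact hbK a ha
      · rcases Fin.eq_zero_or_eq_succ j with rfl | ⟨j', rfl⟩
        · intro a ha b hb
          simp only [Fin.cons_succ] at ha
          simp only [Fin.cons_zero] at hb
          have haK : a ∈ K := Submodule.map_subtype_le K (Vs' i') ha
          exact (wallSymm q a b).trans (haK b hb)
        · intro a ha b hb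
          simp only [Fin.cons_succ] at ha hb
          have hij' : i' ≠ j' := fun h => hij (by rw [h])
          obtain ⟨a₀, ha₀, rfl⟩ := ha
          obtain ⟨b₀, hb₀, rfl⟩ := hb
          have h := hc4 i' j' hij' a₀ ha₀ b₀ hb₀
          rwa [hB'] at h
    · rw [eq_bot_iff]
      rintro w hw
      obtain ⟨hw1, hw2⟩ := Submodule.mem_inf.mp hw
      obtain ⟨w₀, hw₀, rfl⟩ := hw1
      have hmem : w₀ ∈ W' ⊓ LinearMap.BilinForm.orthogonal (QuadraticMap.polarBilin q') W' := by
        refine Submodule.mem_inf.mpr ⟨hw₀, ?_⟩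
        intro t ht
        show QuadraticMap.polarBilin q' t w₀ = 0
        rw [hB']
        exact hw2 (K.subtype t) (Submodule.mem_map_of_mem ht)
      rw [hc5] at hmem
      rw [(Submodule.mem_bot F).mp hmem]
      simp
    · intro i
      rcases Fin.eq_zero_or_eq_succ i with rfl | ⟨i', rfl⟩
      · simp only [Fin.cons_zero]
        exact disjoint_iff.mp hcompl.disjoint
      · simp only [Fin.cons_succ]
        rw [eq_bot_iff]
        rintro w hw
        obtain ⟨hw1, hw2⟩ := Submodule.mem_inf.mp hw
        obtain ⟨w₀, hw₀, rfl⟩ := hw1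
        have hmem : w₀ ∈ Vs' i'
            ⊓ LinearMap.BilinForm.orthogonal (QuadraticMap.polarBilin q') (Vs' i') := by
          refine Submodule.mem_inf.mpr ⟨hw₀, ?_⟩
          intro t ht
          show QuadraticMap.polarBilin q' t w₀ = 0
          rw [hB']
          exact hw2 (K.subtype t) (Submodule.mem_map_of_mem ht)
        rw [hc6 i'] at hmem
        rw [(Submodule.mem_bot F).mp hmem]
        simp
    · intro w hw
      obtain ⟨w₀, hw₀, rfl⟩ := hw
      have h := hc7 w₀ hw₀
      calc τ (K.subtype w₀) = K.subtype (τ' w₀) := rfl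
        _ = K.subtype w₀ := by rw [h]
    · intro i
      rcases Fin.eq_zero_or_eq_succ i with rfl | ⟨i', rfl⟩
      · intro w hw
        simp only [Fin.cons_zero] at hw ⊢
        exact hτV₁ w hw
      · intro w hw
        simp only [Fin.cons_succ] at hw ⊢
        obtain ⟨w₀, hw₀, rfl⟩ := hw
        have : τ (K.subtype w₀) = K.subtype (τ' w₀) := rfl
        rw [this]
        exact Submodule.mem_map_of_mem (hc8 i' w₀ hw₀)
    · intro i
      rcases Fin.eq_zero_or_eq_succ i with rfl | ⟨i', rfl⟩
      · exact hfr4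
      · show Module.finrank F ↥(Submodule.map K.subtype (Vs' i')) = 4
        rw [Submodule.finrank_map_subtype_eq]
        exact hc9 i'
    · intro i
      rcases Fin.eq_zero_or_eq_succ i with rfl | ⟨i', rfl⟩
      · show Module.finrank F ↥(LinearMap.ker (τ - LinearMap.id) ⊓ V₁) = 2
        rw [hkerV₁]
        exact hfrK₂
      · show Module.finrank F
            ↥(LinearMap.ker (τ - LinearMap.id) ⊓ Submodule.map K.subtype (Vs' i')) = 2
        rw [hkersucc i', Submodule.finrank_map_subtype_eq]
        exact hc10 i'
    · intro i
      rcases Fin.eq_zero_or_eq_succ i with rfl | ⟨i', rfl⟩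
      · intro w hw
        simp only [Fin.cons_zero] at hw
        rw [hkerV₁] at hw
        exact hqK₂ w hw
      · intro w hw
        simp only [Fin.cons_succ] at hw
        rw [hkersucc i'] at hw
        obtain ⟨w₀, hw₀, rfl⟩ := hw
        exact hc11 i' w₀ hw₀


theorem wall_stmt15 {F V : Type*} [Field F] [AddCommGroup V] [Module F V]
    [FiniteDimensional F V] (q : QuadraticForm F V)
    (hq : LinearMap.BilinForm.Nondegenerate (QuadraticMap.polarBilin q))
    (τ : V →ₗ[F] V) (hτ : ∀ x, q (τ x) = q x)
    (h2 : (τ - LinearMap.id) ∘ₗ (τ - LinearMap.id) = 0)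
    (halt : ∀ y : V, QuadraticMap.polarBilin q (τ y - y) y = 0) :
    ∃ (m : ℕ) (W : Submodule F V) (Vs : Fin m → Submodule F V),
      2 * m = Module.finrank F (LinearMap.range (τ - LinearMap.id)) ∧
      W ⊔ (⨆ i, Vs i) = ⊤ ∧
      (∀ i, ∀ x ∈ W, ∀ y ∈ Vs i, QuadraticMap.polarBilin q x y = 0) ∧
      (∀ i j, i ≠ j → ∀ x ∈ Vs i, ∀ y ∈ Vs j, QuadraticMap.polarBilin q x y = 0) ∧
      W ⊓ LinearMap.BilinForm.orthogonal (QuadraticMap.polarBilin q) W = ⊥ ∧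
      (∀ i, Vs i ⊓ LinearMap.BilinForm.orthogonal (QuadraticMap.polarBilin q) (Vs i) = ⊥) ∧
      (∀ x ∈ W, τ x = x) ∧
      (∀ i, ∀ x ∈ Vs i, τ x ∈ Vs i) ∧
      (∀ i, Module.finrank F (Vs i) = 4) ∧
      (∀ i, Module.finrank F ↥(LinearMap.ker (τ - LinearMap.id) ⊓ Vs i) = 2) ∧
      (∀ i, ∀ v ∈ LinearMap.ker (τ - LinearMap.id) ⊓ Vs i, q v = 0) :=
  wall_aux (Module.finrank F (LinearMap.range (τ - LinearMap.id))) q hq τ hτ h2 halt rfl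
end

section
/- Let (V,q) be a nondegenerate quadratic space over a field F of characteristic 2 and τ an involution in O(V,q) whose Wall form ω_τ is nonalternating (there exists u ∈ R(τ) with ω_τ(u,u) ≠ 0) and diagonalizable with orthogonal basis (u₁,…,u_m) of R(τ). Then V decomposes as an orthogonal direct sum V = W ⊥ V₁ ⊥ ⋯ ⊥ V_m of τ-invariant regular subspaces with τ|_W = id, each V_i 2-dimensional containing u_i, and τ|_{V_i} equal to the reflection τ_{u_i}. -/
/-!
As τ² = 1 and char F = 2, τ fixes R(τ) pointwise, so R(τ) is totally isotropic, and for
u = τx − x one finds q(u) = b(u, x) = ω_τ(u, u). Writing τv − v = Σ cⱼ uⱼ, the vector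
v − Σ cⱼ xⱼ is τ-fixed, hence orthogonal to R(τ), which gives b(uᵢ, v) = cᵢ q(uᵢ). Nondegeneracy
then forces q(uᵢ) ≠ 0, and a vector orthogonal to every uᵢ is fixed by τ.

Correcting each xᵢ by a triangular combination of the uⱼ produces zᵢ with τzᵢ = zᵢ + uᵢ and
b(zᵢ, zⱼ) = 0. The planes Vᵢ = ⟨uᵢ, zᵢ⟩ are then mutually orthogonal hyperbolic planes on which
τ acts as the reflection τ_{uᵢ}, and W = (V₁ ⊥ ⋯ ⊥ V_m)^⊥ is a regular complement fixed by τ.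
-/

namespace LinearMap.BilinForm

variable {F V : Type*} [Field F] [AddCommGroup V] [Module F V] {B : LinearMap.BilinForm F V}

theorem mem_orthogonal_span_iff {s : Set V} {y : V} :
    y ∈ B.orthogonal (Submodule.span F s) ↔ ∀ x ∈ s, B x y = 0 := by
  rw [mem_orthogonal_iff]
  exact ⟨fun h x hx => h x (Submodule.subset_span hx), fun h x hx =>
    (Submodule.span_le (p := LinearMap.ker (B.flip y))).2 h hx⟩

theorem orthogonal_inf_orthogonal_orthogonal_eq_bot (hB : B.Nondegenerate) (hr : B.IsRefl)
    {U : Submodule F V} (hU : U ⊔ B.orthogonal U = ⊤) :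
    B.orthogonal U ⊓ B.orthogonal (B.orthogonal U) = ⊥ := by
  refine eq_bot_iff.2 fun x ⟨hxU, hxW⟩ => hB.1 x fun v => ?_
  obtain ⟨a, ha, c, hc, rfl⟩ := Submodule.mem_sup.1 (hU ▸ Submodule.mem_top : v ∈ U ⊔ _)
  rw [map_add, hr _ _ (hxU a ha), hr _ _ (hxW c hc), add_zero]

theorem eq_zero_of_hyperbolic (hB : B.IsAlt) {e f : V} (hef : B e f ≠ 0) {a b : F}
    (h₁ : B e (a • e + b • f) = 0) (h₂ : B f (a • e + b • f) = 0) : a = 0 ∧ b = 0 := by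
  have hfe : B f e ≠ 0 := fun h => hef (hB.eq_iff.1 h)
  simp only [map_add, map_smul, smul_eq_mul, hB.self_eq_zero, mul_zero, add_zero,
    zero_add] at h₁ h₂
  exact ⟨(mul_eq_zero.1 h₂).resolve_right hfe, (mul_eq_zero.1 h₁).resolve_right hef⟩

theorem span_pair_inf_orthogonal_eq_bot (hB : B.IsAlt) {e f : V} (hef : B e f ≠ 0) :
    Submodule.span F {e, f} ⊓ B.orthogonal (Submodule.span F {e, f}) = ⊥ := by
  refine eq_bot_iff.2 fun x hx => ?_
  obtain ⟨hx, hxo⟩ := Submodule.mem_inf.1 hx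
  obtain ⟨a, b, rfl⟩ := Submodule.mem_span_pair.1 hx
  rw [mem_orthogonal_span_iff] at hxo
  obtain ⟨rfl, rfl⟩ := eq_zero_of_hyperbolic hB hef (hxo e (by simp)) (hxo f (by simp))
  simp

theorem finrank_span_pair_eq_two (hB : B.IsAlt) {e f : V} (hef : B e f ≠ 0) :
    Module.finrank F (Submodule.span F {e, f}) = 2 := by
  have hli : LinearIndependent F ![e, f] := LinearIndependent.pair_iff.2 fun a b h =>
    eq_zero_of_hyperbolic hB hef (by rw [h, map_zero]) (by rw [h, map_zero])
  rw [← Matrix.range_cons_cons_empty e f ![], finrank_span_eq_card hli, Fintype.card_fin]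

theorem span_pair_le_orthogonal_span_pair {e f e' f' : V} (hee : B e e' = 0)
    (hff : B f f' = 0) (hef : B e f' = 0) (hfe : B f e' = 0) :
    Submodule.span F {e', f'} ≤ B.orthogonal (Submodule.span F {e, f}) := by
  refine Submodule.span_le.2 fun y hy => mem_orthogonal_span_iff.2 fun x hx => ?_
  rcases hx with rfl | rfl <;> rcases hy with rfl | rfl <;> assumption

variable {ι : Type*}

theorem iSup_span_pair_sup_orthogonal_eq_top [Fintype ι] (hB : B.IsAlt)
    {u z : ι → V} (huu : ∀ i j, B (u i) (u j) = 0) (hzz : ∀ i j, B (z i) (z j) = 0)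
    (huz : ∀ i j, i ≠ j → B (u i) (z j) = 0) (hc : ∀ i, B (u i) (z i) ≠ 0) :
    (⨆ i, Submodule.span F {u i, z i}) ⊔ B.orthogonal (⨆ i, Submodule.span F {u i, z i}) = ⊤ := by
  classical
  set c := fun i => B (u i) (z i)
  have huz' : ∀ i j, B (u i) (z j) = if i = j then c i else 0 := fun i j => by
    split_ifs with h
    · rw [h]
    · exact huz i j h
  have hzu : ∀ i j, B (z i) (u j) = if j = i then -c j else 0 := fun i j => by
    rw [← hB.neg_eq, huz', apply_ite Neg.neg, neg_zero]
  set P : V → V := fun v => ∑ i, ((B (u i) v / c i) • z i - (B (z i) v / c i) • u i)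
  have hP : ∀ v, P v ∈ ⨆ i, Submodule.span F {u i, z i} := fun v =>
    Submodule.sum_mem _ fun i _ => Submodule.mem_iSup_of_mem i <| Submodule.sub_mem _
      (Submodule.smul_mem _ _ (Submodule.subset_span (by simp)))
      (Submodule.smul_mem _ _ (Submodule.subset_span (by simp)))
  have hPu : ∀ j v, B (u j) (P v) = B (u j) v := fun j v => by
    simpa [P, huu, huz'] using div_mul_cancel₀ _ (hc j)
  have hPz : ∀ j v, B (z j) (P v) = B (z j) v := fun j v => by
    simpa [P, hzz, hzu] using div_mul_cancel₀ _ (hc j)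
  refine eq_top_iff.2 fun v _ => Submodule.mem_sup.2 ⟨P v, hP v, v - P v, ?_, add_sub_cancel _ _⟩
  rw [← Submodule.span_iUnion, mem_orthogonal_span_iff]
  simp only [Set.mem_iUnion, Set.mem_insert_iff, Set.mem_singleton_iff]
  rintro x ⟨i, rfl | rfl⟩ <;> simp [hPu, hPz]

theorem exists_isotropic_family_sub_mem_span [Fintype ι] [LinearOrder ι] (hB : B.IsAlt)
    {u x : ι → V} (huu : ∀ i j, B (u i) (u j) = 0) (hux : ∀ i j, i ≠ j → B (u i) (x j) = 0)
    (hc : ∀ i, B (u i) (x i) ≠ 0) :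
    ∃ z : ι → V, (∀ j, z j - x j ∈ Submodule.span F (Set.range u)) ∧
      (∀ i j, B (u i) (z j) = B (u i) (x j)) ∧ ∀ i j, B (z i) (z j) = 0 := by
  obtain ⟨c, hc, hux⟩ : ∃ c : ι → F, (∀ i, c i ≠ 0) ∧
      ∀ i j, B (u i) (x j) = if i = j then c i else 0 := ⟨fun i => B (u i) (x i), hc,
    fun i j => by split_ifs with h; exacts [h ▸ rfl, hux i j h]⟩
  -- for `i ≠ j` exactly one of `r i j`, `r j i` is nonzero, and it cancels `B (x i) (x j)`
  set r : ι → ι → F := fun j k => if j < k then -B (x j) (x k) / c k else 0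
  set z : ι → V := fun j => x j + ∑ k, r j k • u k
  have hu_z : ∀ i j, B (u i) (z j) = B (u i) (x j) := fun i j => by simp [z, huu]
  have hz_z : ∀ i j, B (z i) (z j) = B (x i) (x j) - r j i * c i + r i j * c j := fun i j => by
    have hxu : ∀ k, B (x i) (u k) = -B (u k) (x i) := fun k => (hB.neg_eq _ _).symm
    simp [z, hu_z, hux, hxu, sub_eq_add_neg]
  refine ⟨z, fun j => ?_, hu_z, fun i j => ?_⟩
  · simpa [z] using Submodule.sum_mem _ fun k _ =>
      Submodule.smul_mem _ (r j k) (Submodule.subset_span (Set.mem_range_self k))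
  rw [hz_z]
  rcases lt_trichotomy i j with h | rfl | h
  · simp only [r, if_pos h, if_neg h.not_gt]
    rw [div_mul_cancel₀ _ (hc j)]
    ring
  · simp [r, hB.self_eq_zero]
  · simp only [r, if_pos h, if_neg h.not_gt]
    rw [div_mul_cancel₀ _ (hc i), ← hB.neg_eq (x j)]
    ring

end LinearMap.BilinForm

namespace QuadraticMap

variable {F V ι : Type*} [Field F] [AddCommGroup V] [Module F V] {q : QuadraticForm F V}
  {τ : V →ₗ[F] V}

theorem polarBilin_map_map_s16 (hτ : ∀ x, q (τ x) = q x) (x y : V) :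
    q.polarBilin (τ x) (τ y) = q.polarBilin x y := by
  simp only [polarBilin_apply_apply, polar, ← map_add, hτ]

theorem polarBilin_sub_self_of_apply_eq (hτ : ∀ x, q (τ x) = q x) (x : V) {y : V}
    (hy : τ y = y) : q.polarBilin (τ x - x) y = 0 := by
  calc q.polarBilin (τ x - x) y = q.polarBilin (τ x) (τ y) - q.polarBilin x y := by
        rw [hy, map_sub, LinearMap.sub_apply]
    _ = 0 := by rw [polarBilin_map_map_s16 hτ, sub_self]

variable [Fintype ι] {u xs : ι → V}

theorem exists_sub_self_eq_sum
    (hspan : LinearMap.range (τ - LinearMap.id) ≤ Submodule.span F (Set.range u)) (v : V) :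
    ∃ c : ι → F, τ v - v = ∑ j, c j • u j := by
  obtain ⟨c, hc⟩ := Submodule.mem_span_range_iff_exists_fun F |>.1 <|
    hspan (LinearMap.mem_range_self (τ - LinearMap.id) v)
  exact ⟨c, hc.symm⟩

variable [CharP F 2]

theorem isAlt_polarBilin (q : QuadraticForm F V) : LinearMap.BilinForm.IsAlt q.polarBilin :=
  fun x => by rw [polarBilin_apply_apply, polar_self, CharTwo.two_nsmul]

theorem polarBilin_sub_self_self (hτ : ∀ x, q (τ x) = q x) (x : V) :
    q.polarBilin (τ x - x) x = q (τ x - x) := by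
  rw [polarBilin_apply_apply, polar, sub_add_cancel, hτ, sub_sub_cancel_left, CharTwo.neg_eq]

theorem apply_eq_self_of_mem_range_sub_id (hinv : τ ∘ₗ τ = LinearMap.id) {y : V}
    (hy : y ∈ LinearMap.range (τ - LinearMap.id)) : τ y = y := by
  obtain ⟨x, rfl⟩ := hy
  rw [LinearMap.sub_apply, LinearMap.id_apply, map_sub, ← LinearMap.comp_apply, hinv,
    LinearMap.id_apply, ← neg_sub, ← neg_one_smul F, CharTwo.neg_eq, one_smul]

theorem polarBilin_eq_mul_of_sub_eq_sum (hτ : ∀ x, q (τ x) = q x)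
    (hu : ∀ i, τ (xs i) - xs i = u i)
    (horth : ∀ i j, i ≠ j → q.polarBilin (u i) (xs j) = 0) {v : V} {c : ι → F}
    (hv : τ v - v = ∑ j, c j • u j) (i : ι) : q.polarBilin (u i) v = c i * q (u i) := by
  have hfix : τ (v - ∑ j, c j • xs j) = v - ∑ j, c j • xs j := by
    simp only [map_sub, map_sum, map_smul, ← hu, smul_sub, Finset.sum_sub_distrib] at hv ⊢
    exact sub_eq_sub_iff_sub_eq_sub.2 hv
  calc q.polarBilin (u i) v
      = q.polarBilin (u i) (v - ∑ j, c j • xs j) + ∑ j, c j * q.polarBilin (u i) (xs j) := by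
        simp [map_sub]
    _ = c i * q (u i) := by
        rw [← hu i, polarBilin_sub_self_of_apply_eq hτ _ hfix, zero_add, hu i,
          Finset.sum_eq_single i (fun j _ hj => by rw [horth i j hj.symm, mul_zero]) (by simp),
          ← hu i, polarBilin_sub_self_self hτ]

theorem apply_ne_zero_of_nondegenerate (hq : q.polarBilin.Nondegenerate)
    (hτ : ∀ x, q (τ x) = q x) (hu : ∀ i, τ (xs i) - xs i = u i)
    (horth : ∀ i j, i ≠ j → q.polarBilin (u i) (xs j) = 0)
    (hspan : LinearMap.range (τ - LinearMap.id) ≤ Submodule.span F (Set.range u))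
    {i : ι} (hi : u i ≠ 0) : q (u i) ≠ 0 := fun h => hi <| hq.1 _ fun v => by
  obtain ⟨c, hc⟩ := exists_sub_self_eq_sum hspan v
  rw [polarBilin_eq_mul_of_sub_eq_sum hτ hu horth hc, h, mul_zero]

theorem apply_eq_self_of_polarBilin_eq_zero (hτ : ∀ x, q (τ x) = q x)
    (hu : ∀ i, τ (xs i) - xs i = u i)
    (horth : ∀ i j, i ≠ j → q.polarBilin (u i) (xs j) = 0)
    (hspan : LinearMap.range (τ - LinearMap.id) ≤ Submodule.span F (Set.range u))
    (hq0 : ∀ i, q (u i) ≠ 0) {w : V} (hw : ∀ i, q.polarBilin (u i) w = 0) : τ w = w := by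
  obtain ⟨c, hc⟩ := exists_sub_self_eq_sum hspan w
  have hc0 : ∀ i, c i = 0 := fun i => (mul_eq_zero.1 <|
    (polarBilin_eq_mul_of_sub_eq_sum hτ hu horth hc i).symm.trans (hw i)).resolve_right (hq0 i)
  simpa [hc0, sub_eq_zero] using hc

theorem apply_eq_reflection_of_mem_span_pair {e f : V} (hτe : τ e = e) (hτf : τ f = f + e)
    (hef : q.polarBilin e f = q e) (he : q e ≠ 0) {v : V} (hv : v ∈ Submodule.span F {e, f}) :
    τ v = v - (q.polarBilin e v / q e) • e := by
  obtain ⟨a, b, rfl⟩ := Submodule.mem_span_pair.1 hv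
  have hb : q.polarBilin e (a • e + b • f) / q e = b := by
    rw [map_add, map_smul, map_smul, (isAlt_polarBilin q).self_eq_zero, hef, smul_zero,
      zero_add, smul_eq_mul, mul_div_cancel_right₀ _ he]
  rw [hb, map_add, map_smul, map_smul, hτe, hτf, sub_eq_add_neg, ← neg_smul, CharTwo.neg_eq]
  module

theorem exists_hyperbolic_partners [LinearOrder ι] (hq : q.polarBilin.Nondegenerate)
    (hτ : ∀ x, q (τ x) = q x) (hinv : τ ∘ₗ τ = LinearMap.id) (hu : ∀ i, τ (xs i) - xs i = u i)
    (hind : LinearIndependent F u)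
    (hspan : Submodule.span F (Set.range u) = LinearMap.range (τ - LinearMap.id))
    (horth : ∀ i j, i ≠ j → q.polarBilin (u i) (xs j) = 0) :
    ∃ z : ι → V, (∀ i, τ (u i) = u i) ∧ (∀ i, τ (z i) = z i + u i) ∧ (∀ i, q (u i) ≠ 0) ∧
      (∀ i, q.polarBilin (u i) (z i) = q (u i)) ∧ (∀ i j, q.polarBilin (u i) (u j) = 0) ∧
      (∀ i j, q.polarBilin (z i) (z j) = 0) ∧ ∀ i j, i ≠ j → q.polarBilin (u i) (z j) = 0 := by
  have hτu : ∀ i, τ (u i) = u i := fun i =>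
    apply_eq_self_of_mem_range_sub_id hinv (hspan ▸ Submodule.subset_span ⟨i, rfl⟩)
  have huu : ∀ i j, q.polarBilin (u i) (u j) = 0 := fun i j =>
    hu i ▸ polarBilin_sub_self_of_apply_eq hτ _ (hτu j)
  have hux : ∀ i, q.polarBilin (u i) (xs i) = q (u i) := fun i =>
    hu i ▸ polarBilin_sub_self_self hτ (xs i)
  have hqu : ∀ i, q (u i) ≠ 0 := fun i =>
    apply_ne_zero_of_nondegenerate hq hτ hu horth hspan.ge (hind.ne_zero i)
  obtain ⟨z, hzx, huz, hzz⟩ := LinearMap.BilinForm.exists_isotropic_family_sub_mem_span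
    (isAlt_polarBilin q) huu horth fun i => hux i ▸ hqu i
  refine ⟨z, hτu, fun i => ?_, hqu, fun i => (huz i i).trans (hux i), huu, hzz,
    fun i j h => (huz i j).trans (horth i j h)⟩
  have hfix := apply_eq_self_of_mem_range_sub_id hinv (hspan ▸ hzx i)
  rw [map_sub, sub_eq_sub_iff_sub_eq_sub, hu i] at hfix
  rw [← sub_eq_iff_eq_add', hfix]

end QuadraticMap

theorem wall_stmt16_general {F V : Type*} [Field F] [CharP F 2] [AddCommGroup V] [Module F V]
    (q : QuadraticForm F V)
    (hq : LinearMap.BilinForm.Nondegenerate (QuadraticMap.polarBilin q))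
    (τ : V →ₗ[F] V) (hτ : ∀ x, q (τ x) = q x)
    (hinv : τ ∘ₗ τ = LinearMap.id)
    (m : ℕ) (u xs : Fin m → V) (hu : ∀ i, τ (xs i) - xs i = u i)
    (hind : LinearIndependent F u)
    (hspan : Submodule.span F (Set.range u) = LinearMap.range (τ - LinearMap.id))
    (horth : ∀ i j, i ≠ j → QuadraticMap.polarBilin q (u i) (xs j) = 0) :
    ∃ (W : Submodule F V) (Vs : Fin m → Submodule F V),
      W ⊔ (⨆ i, Vs i) = ⊤ ∧
      (∀ i, ∀ x ∈ W, ∀ y ∈ Vs i, QuadraticMap.polarBilin q x y = 0) ∧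
      (∀ i j, i ≠ j → ∀ x ∈ Vs i, ∀ y ∈ Vs j, QuadraticMap.polarBilin q x y = 0) ∧
      W ⊓ LinearMap.BilinForm.orthogonal (QuadraticMap.polarBilin q) W = ⊥ ∧
      (∀ i, Vs i ⊓ LinearMap.BilinForm.orthogonal (QuadraticMap.polarBilin q) (Vs i) = ⊥) ∧
      (∀ x ∈ W, τ x = x) ∧
      (∀ i, ∀ x ∈ Vs i, τ x ∈ Vs i) ∧
      (∀ i, Module.finrank F (Vs i) = 2) ∧
      (∀ i, u i ∈ Vs i) ∧
      (∀ i, ∀ v ∈ Vs i,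
        τ v = v - (QuadraticMap.polarBilin q (u i) v / q (u i)) • u i) := by
  set B : LinearMap.BilinForm F V := QuadraticMap.polarBilin q
  have hB : B.IsAlt := QuadraticMap.isAlt_polarBilin q
  obtain ⟨z, hτu, hτz, hqu, huzi, huu, hzz, huz⟩ :=
    QuadraticMap.exists_hyperbolic_partners hq hτ hinv hu hind hspan horth
  set Vs : Fin m → Submodule F V := fun i => Submodule.span F {u i, z i}
  have hrefl : ∀ i, ∀ v ∈ Vs i, τ v = v - (B (u i) v / q (u i)) • u i := fun i _ hv =>
    QuadraticMap.apply_eq_reflection_of_mem_span_pair (hτu i) (hτz i) (huzi i) (hqu i) hv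
  have htop := LinearMap.BilinForm.iSup_span_pair_sup_orthogonal_eq_top hB huu hzz huz
    fun i => huzi i ▸ hqu i
  refine ⟨B.orthogonal (⨆ i, Vs i), Vs, by rwa [sup_comm], fun i x hx y hy => ?_,
    fun i j hij x hx y hy => ?_,
    LinearMap.BilinForm.orthogonal_inf_orthogonal_orthogonal_eq_bot hq hB.isRefl htop,
    fun i => LinearMap.BilinForm.span_pair_inf_orthogonal_eq_bot hB (huzi i ▸ hqu i),
    fun w hw => ?_, fun i v hv => ?_,
    fun i => LinearMap.BilinForm.finrank_span_pair_eq_two hB (huzi i ▸ hqu i),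
    fun i => Submodule.subset_span (by simp), hrefl⟩
  · exact hB.isRefl _ _ (hx y (Submodule.mem_iSup_of_mem i hy))
  · exact LinearMap.BilinForm.span_pair_le_orthogonal_span_pair (huu i j) (hzz i j) (huz i j hij)
      (hB.eq_iff.1 (huz j i (Ne.symm hij))) hy x hx
  · exact QuadraticMap.apply_eq_self_of_polarBilin_eq_zero hτ hu horth hspan.ge hqu fun i =>
      hw _ (Submodule.mem_iSup_of_mem i (Submodule.subset_span (by simp)))
  · rw [hrefl i v hv]
    exact Submodule.sub_mem _ hv (Submodule.smul_mem _ _ (Submodule.subset_span (by simp)))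

theorem wall_stmt16 {F V : Type*} [Field F] [CharP F 2] [AddCommGroup V] [Module F V]
    [FiniteDimensional F V] (q : QuadraticForm F V)
    (hq : LinearMap.BilinForm.Nondegenerate (QuadraticMap.polarBilin q))
    (τ : V →ₗ[F] V) (hτ : ∀ x, q (τ x) = q x)
    (hinv : τ ∘ₗ τ = LinearMap.id)
    (hnonalt : ∃ y : V, QuadraticMap.polarBilin q (τ y - y) y ≠ 0)
    (m : ℕ) (u xs : Fin m → V) (hu : ∀ i, τ (xs i) - xs i = u i)
    (hind : LinearIndependent F u)
    (hspan : Submodule.span F (Set.range u) = LinearMap.range (τ - LinearMap.id))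
    (horth : ∀ i j, i ≠ j → QuadraticMap.polarBilin q (u i) (xs j) = 0) :
    ∃ (W : Submodule F V) (Vs : Fin m → Submodule F V),
      W ⊔ (⨆ i, Vs i) = ⊤ ∧
      (∀ i, ∀ x ∈ W, ∀ y ∈ Vs i, QuadraticMap.polarBilin q x y = 0) ∧
      (∀ i j, i ≠ j → ∀ x ∈ Vs i, ∀ y ∈ Vs j, QuadraticMap.polarBilin q x y = 0) ∧
      W ⊓ LinearMap.BilinForm.orthogonal (QuadraticMap.polarBilin q) W = ⊥ ∧
      (∀ i, Vs i ⊓ LinearMap.BilinForm.orthogonal (QuadraticMap.polarBilin q) (Vs i) = ⊥) ∧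
      (∀ x ∈ W, τ x = x) ∧
      (∀ i, ∀ x ∈ Vs i, τ x ∈ Vs i) ∧
      (∀ i, Module.finrank F (Vs i) = 2) ∧
      (∀ i, u i ∈ Vs i) ∧
      (∀ i, ∀ v ∈ Vs i,
        τ v = v - (QuadraticMap.polarBilin q (u i) v / q (u i)) • u i) :=
  wall_stmt16_general q hq τ hτ hinv m u xs hu hind hspan horth
end

section
/- Let (V,q) be a nondegenerate quadratic space over a field F of characteristic 2 and τ an involution in O(V,q) with R(τ) = K(τ). Suppose (u₁,…,u_s) is an orthogonal basis of R(τ) with respect to the Wall form ω_τ. Then in the Clifford algebra C(q), the elements u₁,…,u_s pairwise commute, satisfy u_i² = q(u_i) ∈ F, and generate a commutative subalgebra of dimension 2^s over F, where s = (dim V)/2. -/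
/-!
Every `u i` is fixed by `τ` (as `R(τ) ⊆ K(τ)`) and `u j = τ (xs j) - xs j`, so
`b_q (u i, u j) = b_q (τ (u i), τ (xs j)) - b_q (u i, xs j) = 0`. In characteristic 2 the relation
`ι a * ι b + ι b * ι a = b_q (a, b)` then makes the `ι (u i)` commute, and the subalgebra they
generate is spanned by the `2 ^ s` monomials `∏_{i ∈ S} ι (u i)`. These are linearly independent:
contracting with a functional `d i` dual to `u i` deletes `u i` from the monomials containing it and
kills the others, so contracting a relation along a maximal monomial occurring in it leaves a
nonzero multiple of `1`, and `1 ≠ 0` in `C(q)` because `changeForm` identifies `C(q)` with the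
exterior algebra as a vector space.
-/

open CliffordAlgebra

theorem QuadraticMap.polar_sub_self_eq_zero_of_fixed {R M N : Type*} [CommRing R]
    [AddCommGroup M] [Module R M] [AddCommGroup N] [Module R N] {Q : QuadraticMap R M N}
    {τ : M →ₗ[R] M} (hτ : ∀ x, Q (τ x) = Q x) {x : M} (hx : τ x = x) (z : M) :
    polar Q x (τ z - z) = 0 := by
  have hpolar : polar Q (τ x) (τ z) = polar Q x z := by
    simp only [polar, ← map_add, hτ]
  rw [polar_sub_right, ← hpolar, hx, sub_self]

theorem LinearIndependent.exists_dual_apply_eq_ite {K V κ : Type*} [Field K] [AddCommGroup V]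
    [Module K V] [DecidableEq κ] {u : κ → V} (hu : LinearIndependent K u) :
    ∃ d : κ → Module.Dual K V, ∀ i j, d i (u j) = if i = j then 1 else 0 := by
  obtain ⟨g, hg⟩ := (Finsupp.linearCombination K u).exists_leftInverse_of_injective
    (LinearMap.ker_eq_bot.mpr hu)
  refine ⟨fun i => Finsupp.lapply i ∘ₗ g, fun i j => ?_⟩
  have hgu : g (u j) = Finsupp.single j 1 := by
    simpa using LinearMap.congr_fun hg (Finsupp.single j 1)
  simp [hgu, Finsupp.single_apply, eq_comm]

namespace CliffordAlgebra

theorem commute_ι_of_polar_eq_zero {R M : Type*} [CommRing R] [CharP R 2]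
    [AddCommGroup M] [Module R M] {Q : QuadraticForm R M} {a b : M}
    (h : QuadraticMap.polar Q a b = 0) : Commute (ι Q a) (ι Q b) := by
  rw [Commute, SemiconjBy, ι_mul_ι_comm, h, map_zero, zero_sub, ← neg_one_smul R,
    CharTwo.neg_eq, one_smul]

instance nontrivial_of_free {R M : Type*} [CommRing R] [Nontrivial R]
    [AddCommGroup M] [Module R M] [Module.Free R M] (Q : QuadraticForm R M) :
    Nontrivial (CliffordAlgebra Q) := by
  obtain ⟨B, hB⟩ := LinearMap.BilinMap.toQuadraticMap_surjective (0 - Q)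
  refine ⟨⟨1, 0, fun h => one_ne_zero (α := ExteriorAlgebra R M) ?_⟩⟩
  simpa only [changeForm_one, map_zero] using congrArg (changeForm hB) h

section Monomial

variable {R M κ : Type*} [CommRing R] [AddCommGroup M] [Module R M] {Q : QuadraticForm R M}
  {u : κ → M} (hu : ∀ i j, Commute (ι Q (u i)) (ι Q (u j)))

def monomial (S : Finset κ) : CliffordAlgebra Q :=
  S.noncommProd (fun i => ι Q (u i)) fun i _ j _ _ => hu i j

@[simp]
theorem monomial_empty : monomial hu ∅ = 1 := Finset.noncommProd_empty _ _

theorem monomial_mem_adjoin (S : Finset κ) :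
    monomial hu S ∈ Algebra.adjoin R (Set.range fun i => ι Q (u i)) :=
  Submonoid.noncommProd_mem _ _ _ _ fun i _ => Algebra.subset_adjoin ⟨i, rfl⟩

theorem monomial_insert [DecidableEq κ] {i : κ} {S : Finset κ} (hi : i ∉ S) :
    monomial hu (insert i S) = ι Q (u i) * monomial hu S :=
  Finset.noncommProd_insert_of_notMem _ _ _ _ hi

theorem monomial_eq_ι_mul_monomial_erase [DecidableEq κ] {i : κ} {S : Finset κ} (hi : i ∈ S) :
    monomial hu S = ι Q (u i) * monomial hu (S.erase i) := by
  rw [← monomial_insert hu (S.notMem_erase i), Finset.insert_erase hi]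

theorem ι_mul_monomial [DecidableEq κ] (i : κ) (S : Finset κ) :
    ι Q (u i) * monomial hu S =
      if i ∈ S then Q (u i) • monomial hu (S.erase i) else monomial hu (insert i S) := by
  split_ifs with hi
  · rw [monomial_eq_ι_mul_monomial_erase hu hi, ← mul_assoc, ι_sq_scalar, Algebra.smul_def]
  · rw [monomial_insert hu hi]

theorem toSubmodule_adjoin_eq_span_monomial :
    Subalgebra.toSubmodule (Algebra.adjoin R (Set.range fun i => ι Q (u i))) =
      Submodule.span R (Set.range (monomial hu)) := by
  classical
  refine le_antisymm ?_ (Submodule.span_le.mpr ?_)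
  · rw [Algebra.adjoin_eq_span, Submodule.span_le]
    intro x hx
    induction hx using Submonoid.closure_induction_left with
    | one => exact Submodule.subset_span ⟨∅, monomial_empty hu⟩
    | mul_left x hx y _ hy =>
      obtain ⟨i, rfl⟩ := hx
      have hmul : Set.range (monomial hu) ⊆ (LinearMap.mulLeft R (ι Q (u i))) ⁻¹'
          Submodule.span R (Set.range (monomial hu)) := by
        rintro _ ⟨S, rfl⟩
        simp only [Set.mem_preimage, LinearMap.mulLeft_apply, ι_mul_monomial]
        split_ifs
        · exact Submodule.smul_mem _ _ (Submodule.subset_span ⟨_, rfl⟩)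
        · exact Submodule.subset_span ⟨_, rfl⟩
      exact Submodule.span_le (p := (Submodule.span R _).comap _) |>.mpr hmul hy
  · rintro _ ⟨S, rfl⟩
    exact monomial_mem_adjoin hu S

theorem contractLeft_monomial_of_forall_eq_zero [DecidableEq κ] {d : Module.Dual R M}
    {S : Finset κ} (hd : ∀ j ∈ S, d (u j) = 0) : contractLeft d (monomial hu S) = 0 := by
  induction S using Finset.induction_on with
  | empty => rw [monomial_empty, contractLeft_one]
  | insert j S hj ih =>
    rw [monomial_insert hu hj, contractLeft_ι_mul, hd j (S.mem_insert_self j),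
      ih fun k hk => hd k (Finset.mem_insert_of_mem hk), zero_smul, mul_zero, sub_zero]

theorem contractLeft_monomial [DecidableEq κ] {d : Module.Dual R M} {i : κ} (hdi : d (u i) = 1)
    (hd : ∀ j ≠ i, d (u j) = 0) (S : Finset κ) :
    contractLeft d (monomial hu S) = if i ∈ S then monomial hu (S.erase i) else 0 := by
  split_ifs with hi
  · rw [monomial_eq_ι_mul_monomial_erase hu hi, contractLeft_ι_mul, hdi, one_smul,
      contractLeft_monomial_of_forall_eq_zero hu fun j hj => hd j (Finset.ne_of_mem_erase hj),
      mul_zero, sub_zero]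
  · exact contractLeft_monomial_of_forall_eq_zero hu fun j hj => hd j (ne_of_mem_of_not_mem hj hi)

theorem contractLeft_ite_monomial_sdiff [DecidableEq κ] {d : Module.Dual R M} {i : κ}
    (hdi : d (u i) = 1) (hd : ∀ j ≠ i, d (u j) = 0) {S : Finset κ} (hiS : i ∉ S) (T : Finset κ) :
    contractLeft d (if S ⊆ T then monomial hu (T \ S) else 0) =
      if insert i S ⊆ T then monomial hu (T \ insert i S) else 0 := by
  by_cases hST : S ⊆ T
  · rw [if_pos hST, contractLeft_monomial hu hdi hd, Finset.sdiff_insert]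
    simp [Finset.insert_subset_iff, hST, hiS]
  · simp [hST, Finset.insert_subset_iff]

end Monomial

section Field

variable {F V κ : Type*} [Field F] [AddCommGroup V] [Module F V] {Q : QuadraticForm F V}
  {u : κ → V}

theorem linearIndependent_monomial (hu : ∀ i j, Commute (ι Q (u i)) (ι Q (u j)))
    (hli : LinearIndependent F u) : LinearIndependent F (monomial hu) := by
  classical
  obtain ⟨d, hd⟩ := hli.exists_dual_apply_eq_ite
  rw [linearIndependent_iff']
  intro s g hrel T hT
  have hcontract : ∀ S : Finset κ,
      ∑ T ∈ s, g T • (if S ⊆ T then monomial hu (T \ S) else 0) = 0 := by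
    intro S
    induction S using Finset.induction_on with
    | empty => simpa using hrel
    | insert i S hi ih =>
      have hdi : d i (u i) = 1 := by rw [hd, if_pos rfl]
      have hdj : ∀ j ≠ i, d i (u j) = 0 := fun j hj => by rw [hd, if_neg (Ne.symm hj)]
      have hmap := congrArg (contractLeft (d i)) ih
      rw [map_sum, map_zero] at hmap
      simpa only [map_smul, contractLeft_ite_monomial_sdiff hu hdi hdj hi] using hmap
  by_contra hgT
  obtain ⟨T₀, hT₀⟩ := (s.filter (g · ≠ 0)).exists_maximal ⟨T, by simp [hT, hgT]⟩
  obtain ⟨hT₀s, hgT₀⟩ := Finset.mem_filter.mp hT₀.prop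
  have hsingle := hcontract T₀
  rw [Finset.sum_eq_single_of_mem T₀ hT₀s, if_pos subset_rfl, Finset.sdiff_self, monomial_empty,
    smul_eq_zero] at hsingle
  · exact hgT₀ (hsingle.resolve_right one_ne_zero)
  · intro T' hT's hT'
    by_cases hgT' : g T' = 0
    · rw [hgT', zero_smul]
    · rw [if_neg fun h => hT' (hT₀.eq_of_le (by simp [hT's, hgT']) h).symm, smul_zero]

theorem finrank_adjoin_range_ι [Fintype κ] (hu : ∀ i j, Commute (ι Q (u i)) (ι Q (u j)))
    (hli : LinearIndependent F u) :
    Module.finrank F (Algebra.adjoin F (Set.range fun i => ι Q (u i))) = 2 ^ Fintype.card κ := by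
  rw [← Subalgebra.finrank_toSubmodule, toSubmodule_adjoin_eq_span_monomial hu,
    finrank_span_eq_card (linearIndependent_monomial hu hli), Fintype.card_finset]

end Field

end CliffordAlgebra

theorem wall_stmt19_general {F V : Type*} [Field F] [CharP F 2] [AddCommGroup V] [Module F V]
    (q : QuadraticForm F V)
    (τ : V →ₗ[F] V) (hτ : ∀ x, q (τ x) = q x)
    (hRK : LinearMap.range (τ - LinearMap.id) = LinearMap.ker (τ - LinearMap.id))
    (s : ℕ)
    (u xs : Fin s → V) (hu : ∀ i, τ (xs i) - xs i = u i)
    (hind : LinearIndependent F u) :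
    (∀ i j, CliffordAlgebra.ι q (u i) * CliffordAlgebra.ι q (u j) =
        CliffordAlgebra.ι q (u j) * CliffordAlgebra.ι q (u i)) ∧
    (∀ i, CliffordAlgebra.ι q (u i) * CliffordAlgebra.ι q (u i) =
        algebraMap F (CliffordAlgebra q) (q (u i))) ∧
    (∀ a ∈ Algebra.adjoin F (Set.range fun i => CliffordAlgebra.ι q (u i)),
      ∀ b ∈ Algebra.adjoin F (Set.range fun i => CliffordAlgebra.ι q (u i)),
        a * b = b * a) ∧
    Module.finrank F
      (Algebra.adjoin F (Set.range fun i => CliffordAlgebra.ι q (u i))) = 2 ^ s := by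
  have hfixed : ∀ i, τ (u i) = u i := fun i => by
    have hker : u i ∈ LinearMap.ker (τ - LinearMap.id) := hRK ▸ ⟨xs i, by simp [hu]⟩
    simpa [sub_eq_zero] using hker
  have hcomm : ∀ i j, Commute (ι q (u i)) (ι q (u j)) := fun i j =>
    commute_ι_of_polar_eq_zero <| hu j ▸ QuadraticMap.polar_sub_self_eq_zero_of_fixed hτ (hfixed i) _
  have hgen : ∀ x ∈ Set.range fun i => ι q (u i), ∀ y ∈ Set.range fun i => ι q (u i),
      Commute x y := by
    rintro _ ⟨i, rfl⟩ _ ⟨j, rfl⟩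
    exact hcomm i j
  refine ⟨hcomm, fun i => ι_sq_scalar q (u i), fun a ha b hb => ?_, ?_⟩
  · exact Algebra.commute_of_mem_adjoin_of_forall_mem_commute hb fun y hy =>
      (Algebra.commute_of_mem_adjoin_of_forall_mem_commute ha (hgen y hy)).symm
  · simpa using finrank_adjoin_range_ι hcomm hind

theorem wall_stmt19 {F V : Type*} [Field F] [CharP F 2] [AddCommGroup V] [Module F V]
    [FiniteDimensional F V] (q : QuadraticForm F V)
    (hq : LinearMap.BilinForm.Nondegenerate (QuadraticMap.polarBilin q))
    (τ : V →ₗ[F] V) (hτ : ∀ x, q (τ x) = q x)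
    (hinv : τ ∘ₗ τ = LinearMap.id)
    (hRK : LinearMap.range (τ - LinearMap.id) = LinearMap.ker (τ - LinearMap.id))
    (s : ℕ) (hs : 2 * s = Module.finrank F V)
    (u xs : Fin s → V) (hu : ∀ i, τ (xs i) - xs i = u i)
    (hind : LinearIndependent F u)
    (hspan : Submodule.span F (Set.range u) = LinearMap.range (τ - LinearMap.id))
    (horth : ∀ i j, i ≠ j → QuadraticMap.polarBilin q (u i) (xs j) = 0) :
    (∀ i j, CliffordAlgebra.ι q (u i) * CliffordAlgebra.ι q (u j) =
        CliffordAlgebra.ι q (u j) * CliffordAlgebra.ι q (u i)) ∧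
    (∀ i, CliffordAlgebra.ι q (u i) * CliffordAlgebra.ι q (u i) =
        algebraMap F (CliffordAlgebra q) (q (u i))) ∧
    (∀ a ∈ Algebra.adjoin F (Set.range fun i => CliffordAlgebra.ι q (u i)),
      ∀ b ∈ Algebra.adjoin F (Set.range fun i => CliffordAlgebra.ι q (u i)),
        a * b = b * a) ∧
    Module.finrank F
      (Algebra.adjoin F (Set.range fun i => CliffordAlgebra.ι q (u i))) = 2 ^ s :=
  wall_stmt19_general q τ hτ hRK s u xs hu hind
end
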